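/- arXiv:math-ph/0410042 — 6 statements merged into one kernel-verified Lean document; each statement's English description precedes it below -/
import Mathlib

section
/- Let X be a complete Riemannian manifold of bounded geometry with volume growth constant θ_X (i.e., V(a,r) ≤ w₂ e^{θ_X r} for all a and r), let f ∈ L¹_unif(X), p ≥ 1, and ω > θ_X. Then for each a ∈ X the function g_a(x) = exp(−ω·d(a,x)^p) f(x) belongs to L¹(X) and ‖g_a‖₁ ≤ c‖f‖_{1,unif}, where the constant c depends only on ω (and the geometry of X), not on a or f. -/
/-!
Let `v` be the infimum of the volumes of the balls of radius `r₀/4`. A maximal `r₀/2`-separated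
subset of a ball `B(a, R)` covers it by balls of radius `r₀`, and the disjoint `r₀/4`-balls around
its points lie in `B(a, R + r₀/4)`, so it has at most `w₂ e^{θ(R + r₀/4)} / v` points. Hence
`∫_{B(a,R)} |f| ≤ w₂ e^{θ(R + r₀/4)} / v · ‖f‖_{1,unif}`. On the shell `n ≤ d(a,x) < n + 1` the
weight `e^{-ω d(a,x)^p}` is at most `e^{ω - ωn}`, so summing over the shells leaves a geometric
series of ratio `e^{θ-ω} < 1`.
-/

open MeasureTheory Metric Function
open scoped ENNReal NNReal

section Packing

variable {X : Type*} [PseudoMetricSpace X] [MeasurableSpace X] [OpensMeasurableSpace X]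
  (μ : Measure X) {ε : ℝ≥0} {A C : Set X}

theorem Metric.IsSeparated.encard_mul_iInf_measure_ball_le (hC : IsSeparated ε C) (hCA : C ⊆ A) :
    (C.encard : ℝ≥0∞) * ⨅ x, μ (ball x (ε / 2)) ≤ μ (thickening (ε / 2) A) := by
  have hdisj : Pairwise (Disjoint on fun x : C ↦ ball (x : X) (ε / 2)) := by
    intro x y hxy
    refine ball_disjoint_ball ?_
    have hε : (ε : ℝ≥0∞) < edist (x : X) y := hC x.2 y.2 (Subtype.coe_ne_coe.2 hxy)
    rw [edist_nndist, ENNReal.coe_lt_coe, ← NNReal.coe_lt_coe, coe_nndist] at hε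
    linarith
  calc (C.encard : ℝ≥0∞) * ⨅ x, μ (ball x (ε / 2)) = ∑' _ : C, ⨅ x, μ (ball x (ε / 2)) := by
        rw [ENNReal.tsum_const, ENat.card_coe_set_eq]
    _ ≤ ∑' x : C, μ (ball (x : X) (ε / 2)) := ENNReal.tsum_le_tsum fun x ↦ iInf_le _ _
    _ ≤ μ (⋃ x : C, ball (x : X) (ε / 2)) :=
        tsum_meas_le_meas_iUnion_of_disjoint μ (fun _ ↦ measurableSet_ball) hdisj
    _ ≤ μ (thickening (ε / 2) A) :=
        measure_mono (Set.iUnion_subset fun x ↦ ball_subset_thickening (hCA x.2) _)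

theorem Metric.packingNumber_mul_iInf_measure_ball_le (ε : ℝ≥0) (A : Set X) :
    (packingNumber ε A : ℝ≥0∞) * ⨅ x, μ (ball x (ε / 2)) ≤ μ (thickening (ε / 2) A) := by
  simp only [packingNumber, ENat.toENNReal_iSup, ENNReal.iSup_mul, iSup_le_iff]
  exact fun C hCA hC ↦ hC.encard_mul_iInf_measure_ball_le μ hCA

end Packing

theorem Real.sub_one_le_rpow {t p : ℝ} (ht : 0 ≤ t) (hp : 1 ≤ p) : t - 1 ≤ t ^ p := by
  rcases le_total t 1 with h | h
  · linarith [Real.rpow_nonneg ht p]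
  · linarith [Real.self_le_rpow_of_one_le h hp]

theorem tsum_ofReal_exp_mul_ofReal_mul_exp (ω θ w s : ℝ) :
    ∑' n : ℕ, ENNReal.ofReal (Real.exp (ω - ω * n)) * ENNReal.ofReal (w * Real.exp (θ * (n + s))) =
      ENNReal.ofReal (w * Real.exp (ω + θ * s)) * (1 - ENNReal.ofReal (Real.exp (θ - ω)))⁻¹ := by
  have hterm (n : ℕ) : Real.exp (ω - ω * n) * (w * Real.exp (θ * (n + s))) =
      w * Real.exp (ω + θ * s) * Real.exp (θ - ω) ^ n := by
    rw [← Real.exp_nat_mul, mul_left_comm, mul_assoc, ← Real.exp_add, ← Real.exp_add]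
    ring_nf
  simp only [← ENNReal.ofReal_mul (Real.exp_nonneg _), hterm,
    ENNReal.ofReal_mul' (pow_nonneg (Real.exp_nonneg _) _),
    ENNReal.ofReal_pow (Real.exp_nonneg _), ENNReal.tsum_mul_left, ENNReal.tsum_geometric]

section UniformlyLocal

variable {X : Type*} [PseudoMetricSpace X] [MeasurableSpace X] (μ : Measure X)

/-- The uniformly local `L¹` norm `‖g‖_{1,unif}` at scale `r`. -/
noncomputable def uniformlyLocalLIntegral (r : ℝ) (g : X → ℝ≥0∞) : ℝ≥0∞ :=
  ⨆ x, ∫⁻ y in ball x r, g y ∂μ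

theorem setLIntegral_ball_le_uniformlyLocalLIntegral (r : ℝ) (g : X → ℝ≥0∞) (x : X) :
    ∫⁻ y in ball x r, g y ∂μ ≤ uniformlyLocalLIntegral μ r g :=
  le_iSup (fun x ↦ ∫⁻ y in ball x r, g y ∂μ) x

theorem Metric.IsCover.setLIntegral_le_encard_mul_uniformlyLocalLIntegral {ε : ℝ≥0} {r : ℝ}
    {A N : Set X} (hN : IsCover ε A N) (hNc : N.Countable) (hεr : (ε : ℝ) < r) (g : X → ℝ≥0∞) :
    ∫⁻ x in A, g x ∂μ ≤ N.encard * uniformlyLocalLIntegral μ r g := by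
  have hA : A ⊆ ⋃ y : N, ball (y : X) r := by
    refine hN.subset_iUnion_closedBall.trans fun x hx ↦ ?_
    obtain ⟨y, hy, hxy⟩ := Set.mem_iUnion₂.1 hx
    exact Set.mem_iUnion.2 ⟨⟨y, hy⟩, closedBall_subset_ball hεr hxy⟩
  have := hNc.to_subtype
  calc ∫⁻ x in A, g x ∂μ ≤ ∫⁻ x in ⋃ y : N, ball (y : X) r, g x ∂μ := lintegral_mono_set hA
    _ ≤ ∑' y : N, ∫⁻ x in ball (y : X) r, g x ∂μ := lintegral_iUnion_le _ _
    _ ≤ ∑' _ : N, uniformlyLocalLIntegral μ r g :=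
        ENNReal.tsum_le_tsum fun y ↦ setLIntegral_ball_le_uniformlyLocalLIntegral μ r g y
    _ = N.encard * uniformlyLocalLIntegral μ r g := by
        rw [ENNReal.tsum_const, ENat.card_coe_set_eq]

variable [OpensMeasurableSpace X]

theorem setLIntegral_le_measure_thickening_div_mul_uniformlyLocalLIntegral {r : ℝ} (hr : 0 < r)
    {A : Set X} (hv : ⨅ x, μ (ball x (r / 4)) ≠ 0) (hA : μ (thickening (r / 4) A) ≠ ∞)
    (g : X → ℝ≥0∞) :
    ∫⁻ x in A, g x ∂μ ≤
      μ (thickening (r / 4) A) / (⨅ x, μ (ball x (r / 4))) * uniformlyLocalLIntegral μ r g := by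
  obtain ⟨ε, hε⟩ : ∃ ε : ℝ≥0, (ε : ℝ) = r / 2 := ⟨⟨r / 2, by positivity⟩, rfl⟩
  have hpack := packingNumber_mul_iInf_measure_ball_le μ ε A
  rw [show (ε : ℝ) / 2 = r / 4 by rw [hε]; ring] at hpack
  have hfin : packingNumber ε A ≠ ⊤ := by
    intro htop
    rw [htop, ENat.toENNReal_top, ENNReal.top_mul hv] at hpack
    exact hA (top_le_iff.1 hpack)
  have hN := encard_maximalSeparatedSet hfin
  have hNc : (maximalSeparatedSet ε A).Countable :=
    (Set.encard_ne_top_iff.1 (hN ▸ hfin)).countable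
  calc ∫⁻ x in A, g x ∂μ ≤ (maximalSeparatedSet ε A).encard * uniformlyLocalLIntegral μ r g :=
        (isCover_maximalSeparatedSet hfin).setLIntegral_le_encard_mul_uniformlyLocalLIntegral μ hNc
          (by linarith) g
    _ ≤ μ (thickening (r / 4) A) / (⨅ x, μ (ball x (r / 4))) * uniformlyLocalLIntegral μ r g := by
        refine mul_le_mul_left ?_ _
        rw [hN]
        exact (ENNReal.le_div_iff_mul_le (Or.inl hv) (Or.inr hA)).2 hpack

theorem setLIntegral_ball_le_measure_ball_div_mul_uniformlyLocalLIntegral {r : ℝ} (hr : 0 < r)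
    (hv : ⨅ x, μ (ball x (r / 4)) ≠ 0) {a : X} {R : ℝ} (hR : μ (ball a (R + r / 4)) ≠ ∞)
    (g : X → ℝ≥0∞) :
    ∫⁻ x in ball a R, g x ∂μ ≤
      μ (ball a (R + r / 4)) / (⨅ x, μ (ball x (r / 4))) * uniformlyLocalLIntegral μ r g := by
  have hsub : thickening (r / 4) (ball a R) ⊆ ball a (R + r / 4) :=
    add_comm R (r / 4) ▸ thickening_ball a _ _
  calc ∫⁻ x in ball a R, g x ∂μ ≤ _ :=
        setLIntegral_le_measure_thickening_div_mul_uniformlyLocalLIntegral μ hr hv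
          (ne_top_of_le_ne_top hR (measure_mono hsub)) g
    _ ≤ _ := by gcongr

theorem lintegral_mul_le_tsum_mul_setLIntegral_ball (a : X) {w : ℝ → ℝ≥0} (hw : Antitone w)
    (g : X → ℝ≥0∞) :
    ∫⁻ x, w (dist a x) * g x ∂μ ≤ ∑' n : ℕ, w n * ∫⁻ x in ball a (n + 1), g x ∂μ := by
  set shell : ℕ → Set X := fun n ↦ ball a (n + 1) \ ball a n
  have hcover : ⋃ n, shell n = Set.univ := by
    refine Set.eq_univ_of_forall fun x ↦ Set.mem_iUnion.2 ⟨⌊dist x a⌋₊, ?_, ?_⟩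
    · exact mem_ball.2 (Nat.lt_floor_add_one _)
    · exact not_lt.2 (Nat.floor_le dist_nonneg)
  calc ∫⁻ x, w (dist a x) * g x ∂μ = ∫⁻ x in ⋃ n, shell n, w (dist a x) * g x ∂μ := by
        rw [hcover, setLIntegral_univ]
    _ ≤ ∑' n, ∫⁻ x in shell n, w (dist a x) * g x ∂μ := lintegral_iUnion_le _ _
    _ ≤ ∑' n : ℕ, ∫⁻ x in shell n, w n * g x ∂μ := by
        refine ENNReal.tsum_le_tsum fun n ↦ setLIntegral_mono'
          (measurableSet_ball.diff measurableSet_ball) fun x hx ↦ ?_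
        have hn : (n : ℝ) ≤ dist a x := dist_comm x a ▸ not_lt.1 hx.2
        gcongr
        exact hw hn
    _ = ∑' n : ℕ, w n * ∫⁻ x in shell n, g x ∂μ := by
        simp only [lintegral_const_mul' _ _ ENNReal.coe_ne_top]
    _ ≤ ∑' n : ℕ, w n * ∫⁻ x in ball a (n + 1), g x ∂μ := by
        gcongr with n
        exact Set.sdiff_subset

theorem lintegral_ofReal_exp_mul_le_of_measure_ball_le {r θ ω w : ℝ} (hr : 0 < r) (hω : 0 ≤ ω)
    (hv : ⨅ x, μ (ball x (r / 4)) ≠ 0)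
    (hgrowth : ∀ (a : X) (R : ℝ), 0 < R → μ (ball a R) ≤ ENNReal.ofReal (w * Real.exp (θ * R)))
    (a : X) (g : X → ℝ≥0∞) :
    ∫⁻ x, ENNReal.ofReal (Real.exp (ω - ω * dist a x)) * g x ∂μ ≤
      ENNReal.ofReal (w * Real.exp (ω + θ * (1 + r / 4))) *
        (1 - ENNReal.ofReal (Real.exp (θ - ω)))⁻¹ / (⨅ x, μ (ball x (r / 4))) *
          uniformlyLocalLIntegral μ r g := by
  have hw : Antitone fun t : ℝ ↦ (Real.exp (ω - ω * t)).toNNReal := fun s t hst ↦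
    Real.toNNReal_le_toNNReal (Real.exp_le_exp.2 (by nlinarith))
  calc ∫⁻ x, ENNReal.ofReal (Real.exp (ω - ω * dist a x)) * g x ∂μ
      ≤ ∑' n : ℕ, ENNReal.ofReal (Real.exp (ω - ω * n)) * ∫⁻ x in ball a (n + 1), g x ∂μ :=
        lintegral_mul_le_tsum_mul_setLIntegral_ball μ a hw g
    _ ≤ ∑' n : ℕ, ENNReal.ofReal (Real.exp (ω - ω * n)) *
          (ENNReal.ofReal (w * Real.exp (θ * (n + (1 + r / 4)))) / (⨅ x, μ (ball x (r / 4))) *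
            uniformlyLocalLIntegral μ r g) := by
        gcongr with n
        have hball := hgrowth a (n + 1 + r / 4) (by positivity)
        rw [← add_assoc]
        exact (setLIntegral_ball_le_measure_ball_div_mul_uniformlyLocalLIntegral μ hr hv
          (ne_top_of_le_ne_top ENNReal.ofReal_ne_top hball) g).trans (by gcongr)
    _ = _ := by
        simp only [div_eq_mul_inv, ← mul_assoc, ENNReal.tsum_mul_right,
          tsum_ofReal_exp_mul_ofReal_mul_exp]

end UniformlyLocal

theorem exp_decay_mul_uniformlyLocalL1_integrable_general
    {X : Type*} [MetricSpace X] [MeasurableSpace X] [BorelSpace X]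
    (μ : Measure X) (r₀ θ w₂ : ℝ) (hr₀ : 0 < r₀) (hθ : 0 < θ)
    (hgrowth : ∀ (a : X) (r : ℝ), 0 < r → μ (ball a r) ≤ ENNReal.ofReal (w₂ * Real.exp (θ * r)))
    (hVi : ∀ r : ℝ, 0 < r → 0 < ⨅ x : X, μ (ball x r))
    (p ω : ℝ) (hp : 1 ≤ p) (hω : θ < ω) :
    ∃ c : ℝ≥0∞, c ≠ ⊤ ∧ ∀ (a : X) (f : X → ℝ),
      (⨆ x : X, ∫⁻ y in ball x r₀, (‖f y‖₊ : ℝ≥0∞) ∂μ) ≠ ⊤ →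
      ∫⁻ x, ENNReal.ofReal (Real.exp (-ω * dist a x ^ p)) * (‖f x‖₊ : ℝ≥0∞) ∂μ
        ≤ c * ⨆ x : X, ∫⁻ y in ball x r₀, (‖f y‖₊ : ℝ≥0∞) ∂μ := by
  have hω₀ : 0 ≤ ω := hθ.le.trans hω.le
  have hv : ⨅ x : X, μ (ball x (r₀ / 4)) ≠ 0 := (hVi _ (by positivity)).ne'
  have hq : ENNReal.ofReal (Real.exp (θ - ω)) < 1 := by
    rw [ENNReal.ofReal_lt_one, Real.exp_lt_one_iff]
    linarith
  refine ⟨_, ?_, fun a f _ ↦ le_trans ?_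
    (lintegral_ofReal_exp_mul_le_of_measure_ball_le μ hr₀ hω₀ hv hgrowth a fun x ↦ ‖f x‖₊)⟩
  · exact ENNReal.div_ne_top (ENNReal.mul_ne_top ENNReal.ofReal_ne_top
      (ENNReal.inv_ne_top.2 (tsub_pos_of_lt hq).ne')) hv
  refine lintegral_mono fun x ↦ ?_
  gcongr
  nlinarith [Real.sub_one_le_rpow (dist_nonneg (x := a) (y := x)) hp]

/-- On a space with exponential volume growth (constant `θ`), for `f` in the
uniformly local `L¹` space, the function `x ↦ exp(-ω d(a,x)^p) f(x)` is in `L¹`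
with norm bounded by `c ‖f‖_{1,unif}`, the constant `c` depending only on `ω`
(and the geometry), not on `a` nor on `f`. -/
theorem exp_decay_mul_uniformlyLocalL1_integrable
    {X : Type*} [MetricSpace X] [MeasurableSpace X] [BorelSpace X]
    (μ : Measure X) (r₀ θ w₂ : ℝ) (hr₀ : 0 < r₀) (hθ : 0 < θ) (hw₂ : 0 < w₂)
    (hgrowth : ∀ (a : X) (r : ℝ), 0 < r → μ (ball a r) ≤ ENNReal.ofReal (w₂ * Real.exp (θ * r)))
    (hVi : ∀ r : ℝ, 0 < r → 0 < ⨅ x : X, μ (ball x r))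
    (p ω : ℝ) (hp : 1 ≤ p) (hω : θ < ω) :
    ∃ c : ℝ≥0∞, c ≠ ⊤ ∧ ∀ (a : X) (f : X → ℝ),
      (⨆ x : X, ∫⁻ y in ball x r₀, (‖f y‖₊ : ℝ≥0∞) ∂μ) ≠ ⊤ →
      ∫⁻ x, ENNReal.ofReal (Real.exp (-ω * dist a x ^ p)) * (‖f x‖₊ : ℝ≥0∞) ∂μ
        ≤ c * ⨆ x : X, ∫⁻ y in ball x r₀, (‖f y‖₊ : ℝ≥0∞) ∂μ :=
  exp_decay_mul_uniformlyLocalL1_integrable_general μ r₀ θ w₂ hr₀ hθ hgrowth hVi p ω hp hω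
end

section
/- Under the hypotheses of the previous statement (f ∈ L¹_unif(X), ω > θ_X, p ≥ 1), the tail integrals ∫_{d(a,x) ≥ r} exp(−ω·d(a,x)^p)|f(x)| dx tend to 0 as r → ∞, uniformly with respect to a ∈ X and to f in the unit ball of L¹_unif(X). -/
/-!
Cover `ball a R` by the `r₀`-balls around a maximal `r₀/2`-separated subset of it. The
`r₀/4`-balls around those centres are disjoint and lie in `ball a (R + r₀/4)`, so by the
growth bound there are at most `w₂ e^{θ (R + r₀/4)} / inf_x μ(ball x (r₀/4))` of them; hence
`∫_{ball a R} |f| ≤ C e^{θ R}` uniformly in `a` and in `f` in the unit ball. On the annulus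
`r + n ≤ d(a, x) < r + n + 1` the weight is at most `e^{-ω (r + n)}` (as `d^p ≥ d` for
`d ≥ 1`), so the tail integral is bounded by a geometric series of ratio `e^{θ - ω} < 1`,
which is `O(e^{-(ω - θ) r})`.
-/

open MeasureTheory Metric Filter Topology
open scoped ENNReal NNReal

namespace Metric

variable {X : Type*} [PseudoMetricSpace X] [MeasurableSpace X]

lemma IsSeparated.encard_mul_iInf_measure_ball_le_s2 [OpensMeasurableSpace X] (μ : Measure X)
    {ε : ℝ≥0} {C : Set X} (hC : IsSeparated ↑(2 * ε) C) :
    C.encard * ⨅ x, μ (ball x ε) ≤ μ (⋃ x : C, ball (x : X) ε) := by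
  have hdisj : Pairwise fun x y : C => Disjoint (ball (x : X) ε) (ball (y : X) ε) := by
    intro x y hxy
    have hsep : ((2 * ε : ℝ≥0) : ℝ≥0∞) < edist (x : X) y := hC x.2 y.2 (Subtype.coe_ne_coe.mpr hxy)
    rw [edist_nndist, ENNReal.coe_lt_coe, ← NNReal.coe_lt_coe] at hsep
    exact ball_disjoint_ball (by push_cast at hsep; linarith)
  calc C.encard * ⨅ x, μ (ball x ε) = ∑' _ : C, ⨅ x, μ (ball x ε) := (ENNReal.tsum_const _).symm
    _ ≤ ∑' x : C, μ (ball (x : X) ε) := ENNReal.tsum_le_tsum fun x => iInf_le _ _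
    _ ≤ μ (⋃ x : C, ball (x : X) ε) :=
        tsum_meas_le_meas_iUnion_of_disjoint μ (fun _ => measurableSet_ball) hdisj

lemma packingNumber_ball_mul_iInf_measure_ball_le [OpensMeasurableSpace X] (μ : Measure X)
    (ε : ℝ≥0) (a : X) (R : ℝ) :
    (packingNumber (2 * ε) (ball a R) : ℝ≥0∞) * ⨅ x, μ (ball x ε) ≤ μ (ball a (R + ε)) := by
  simp only [packingNumber, ENat.toENNReal_iSup, ENNReal.iSup_mul, iSup_le_iff]
  intro C hCa hC
  refine (hC.encard_mul_iInf_measure_ball_le_s2 μ).trans (measure_mono (Set.iUnion_subset fun x => ?_))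
  exact ball_subset_ball' (by linarith [mem_ball.mp (hCa x.2)])

lemma packingNumber_ball_ne_top [OpensMeasurableSpace X] {μ : Measure X} {ε : ℝ≥0} {a : X}
    {R : ℝ} (hV : ⨅ x, μ (ball x ε) ≠ 0) (hfin : μ (ball a (R + ε)) ≠ ∞) :
    packingNumber (2 * ε) (ball a R) ≠ ⊤ := by
  intro htop
  have := packingNumber_ball_mul_iInf_measure_ball_le μ ε a R
  rw [htop, ENat.toENNReal_top, ENNReal.top_mul hV] at this
  exact hfin (top_le_iff.mp this)

lemma setLIntegral_le_packingNumber_mul_iSup (μ : Measure X) {ε : ℝ≥0} {s : Set X}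
    (hs : packingNumber ε s ≠ ⊤) (g : X → ℝ≥0∞) :
    ∫⁻ x in s, g x ∂μ ≤ packingNumber ε s * ⨆ x, ∫⁻ y in closedBall x ε, g y ∂μ := by
  set N := maximalSeparatedSet ε s
  have hN : N.encard = packingNumber ε s := encard_maximalSeparatedSet hs
  have : Finite N := Set.encard_ne_top_iff.mp (hN ▸ hs)
  have hcover : s ⊆ ⋃ y : N, closedBall (y : X) ε := by
    rw [Set.iUnion_coe_set]
    exact isCover_iff_subset_iUnion_closedBall.mp (isCover_maximalSeparatedSet hs)
  calc ∫⁻ x in s, g x ∂μ ≤ ∫⁻ x in ⋃ y : N, closedBall (y : X) ε, g x ∂μ :=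
        lintegral_mono_set hcover
    _ ≤ ∑' y : N, ∫⁻ x in closedBall (y : X) ε, g x ∂μ := lintegral_iUnion_le _ _
    _ ≤ ∑' _ : N, ⨆ x, ∫⁻ y in closedBall x ε, g y ∂μ :=
        ENNReal.tsum_le_tsum fun y => le_iSup (fun x => ∫⁻ y in closedBall x ε, g y ∂μ) y
    _ = packingNumber ε s * ⨆ x, ∫⁻ y in closedBall x ε, g y ∂μ := by
        rw [ENNReal.tsum_const, ← Set.encard, hN]

lemma iInf_measure_ball_mul_setLIntegral_ball_le [OpensMeasurableSpace X] (μ : Measure X)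
    {ε : ℝ≥0} {ρ : ℝ} (hρ : 2 * (ε : ℝ) < ρ) (g : X → ℝ≥0∞) {a : X} {R : ℝ}
    (hfin : μ (ball a (R + ε)) ≠ ∞) :
    (⨅ x, μ (ball x ε)) * ∫⁻ x in ball a R, g x ∂μ
      ≤ μ (ball a (R + ε)) * ⨆ x, ∫⁻ y in ball x ρ, g y ∂μ := by
  set V := ⨅ x, μ (ball x ε)
  set M := ⨆ x, ∫⁻ y in ball x ρ, g y ∂μ
  rcases eq_or_ne V 0 with hV | hV
  · simp [hV]
  have hM : ⨆ x, ∫⁻ y in closedBall x ↑(2 * ε), g y ∂μ ≤ M :=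
    iSup_mono fun x => lintegral_mono_set (closedBall_subset_ball (by push_cast; exact hρ))
  calc V * ∫⁻ x in ball a R, g x ∂μ ≤ V * (packingNumber (2 * ε) (ball a R) * M) := by
        gcongr
        exact (setLIntegral_le_packingNumber_mul_iSup μ (packingNumber_ball_ne_top hV hfin) g).trans
          (by gcongr)
    _ = packingNumber (2 * ε) (ball a R) * V * M := by ring
    _ ≤ μ (ball a (R + ε)) * M := by
        gcongr
        exact packingNumber_ball_mul_iInf_measure_ball_le μ ε a R

lemma setLIntegral_ball_le_of_measure_ball_le [OpensMeasurableSpace X] (μ : Measure X)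
    {ε : ℝ≥0} {ρ w θ R : ℝ} (hρ : 2 * (ε : ℝ) < ρ) (hV : ⨅ x, μ (ball x ε) ≠ 0) {a : X}
    (hgrowth : μ (ball a (R + ε)) ≤ ENNReal.ofReal (w * Real.exp (θ * (R + ε))))
    (g : X → ℝ≥0∞) (hg : ⨆ x, ∫⁻ y in ball x ρ, g y ∂μ ≤ 1) :
    ∫⁻ x in ball a R, g x ∂μ
      ≤ ENNReal.ofReal (w * Real.exp (θ * ε)) / (⨅ x, μ (ball x ε))
          * ENNReal.ofReal (Real.exp (θ * R)) := by
  have hexp : ENNReal.ofReal (w * Real.exp (θ * ε)) * ENNReal.ofReal (Real.exp (θ * R))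
      = ENNReal.ofReal (w * Real.exp (θ * (R + ε))) := by
    rw [← ENNReal.ofReal_mul' (Real.exp_nonneg _), mul_add, Real.exp_add]
    ring_nf
  rw [← ENNReal.mul_div_right_comm, hexp, ENNReal.le_div_iff_mul_le (Or.inl hV)
    (Or.inr ENNReal.ofReal_ne_top), mul_comm]
  calc (⨅ x, μ (ball x ε)) * ∫⁻ x in ball a R, g x ∂μ ≤ μ (ball a (R + ε)) * 1 :=
        (iInf_measure_ball_mul_setLIntegral_ball_le μ hρ g
          (ne_top_of_le_ne_top ENNReal.ofReal_ne_top hgrowth)).trans (by gcongr)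
    _ ≤ ENNReal.ofReal (w * Real.exp (θ * (R + ε))) := by rwa [mul_one]

end Metric

lemma setOf_le_dist_subset_iUnion_ball_diff_ball {X : Type*} [PseudoMetricSpace X] (a : X)
    {r : ℝ} :
    {x | r ≤ dist a x} ⊆ ⋃ n : ℕ, ball a (r + n + 1) \ ball a (r + n) := by
  intro x hx
  have hx : 0 ≤ dist x a - r := by rw [dist_comm]; exact sub_nonneg.mpr hx
  refine Set.mem_iUnion.mpr ⟨⌊dist x a - r⌋₊, ?_, ?_⟩
  · rw [mem_ball]; linarith [Nat.lt_floor_add_one (dist x a - r)]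
  · rw [mem_ball, not_lt]; linarith [Nat.floor_le hx]

lemma tendsto_mul_ofReal_exp_mul_atTop_nhds_zero {K : ℝ≥0∞} (hK : K ≠ ∞) {c : ℝ} (hc : c < 0) :
    Tendsto (fun r => K * ENNReal.ofReal (Real.exp (c * r))) atTop (𝓝 0) := by
  have h := ENNReal.Tendsto.const_mul (ENNReal.tendsto_ofReal (Real.tendsto_exp_comp_nhds_zero.mpr
    (tendsto_id.const_mul_atTop_of_neg hc))) (Or.inr hK)
  rwa [ENNReal.ofReal_zero, mul_zero] at h

lemma ENNReal.ofReal_exp_add (x y : ℝ) :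
    ENNReal.ofReal (Real.exp (x + y))
      = ENNReal.ofReal (Real.exp x) * ENNReal.ofReal (Real.exp y) := by
  rw [Real.exp_add, ENNReal.ofReal_mul (Real.exp_nonneg _)]

section Tail

variable {X : Type*} [PseudoMetricSpace X] [MeasurableSpace X] [OpensMeasurableSpace X]
  {μ : Measure X}

lemma setLIntegral_ball_diff_ball_exp_mul_le {p ω r : ℝ} (hp : 1 ≤ p) (hω : 0 ≤ ω) (hr : 1 ≤ r)
    (a : X) (g : X → ℝ≥0∞) :
    ∫⁻ x in ball a (r + 1) \ ball a r, ENNReal.ofReal (Real.exp (-ω * dist a x ^ p)) * g x ∂μ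
      ≤ ENNReal.ofReal (Real.exp (-ω * r)) * ∫⁻ x in ball a (r + 1), g x ∂μ := by
  calc ∫⁻ x in ball a (r + 1) \ ball a r, ENNReal.ofReal (Real.exp (-ω * dist a x ^ p)) * g x ∂μ
      ≤ ∫⁻ x in ball a (r + 1) \ ball a r, ENNReal.ofReal (Real.exp (-ω * r)) * g x ∂μ := by
        refine setLIntegral_mono' (measurableSet_ball.diff measurableSet_ball) fun x hx => ?_
        have hrx : r ≤ dist a x := by simpa [dist_comm] using hx.2
        have hxp : dist a x ≤ dist a x ^ p := Real.self_le_rpow_of_one_le (hr.trans hrx) hp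
        gcongr ENNReal.ofReal (Real.exp ?_) * _
        nlinarith
    _ = ENNReal.ofReal (Real.exp (-ω * r)) * ∫⁻ x in ball a (r + 1) \ ball a r, g x ∂μ :=
        lintegral_const_mul' _ _ ENNReal.ofReal_ne_top
    _ ≤ ENNReal.ofReal (Real.exp (-ω * r)) * ∫⁻ x in ball a (r + 1), g x ∂μ := by
        gcongr
        exact Set.sdiff_subset

lemma setLIntegral_le_dist_exp_mul_le {p ω θ r : ℝ} (hp : 1 ≤ p) (hω : 0 ≤ ω) (hr : 1 ≤ r)
    (a : X) (g : X → ℝ≥0∞) (C : ℝ≥0∞)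
    (hg : ∀ R, r ≤ R → ∫⁻ x in ball a R, g x ∂μ ≤ C * ENNReal.ofReal (Real.exp (θ * R))) :
    ∫⁻ x in {x | r ≤ dist a x}, ENNReal.ofReal (Real.exp (-ω * dist a x ^ p)) * g x ∂μ
      ≤ C * ENNReal.ofReal (Real.exp θ) * (1 - ENNReal.ofReal (Real.exp (θ - ω)))⁻¹
          * ENNReal.ofReal (Real.exp ((θ - ω) * r)) := by
  set F := fun x => ENNReal.ofReal (Real.exp (-ω * dist a x ^ p)) * g x
  have hannulus : ∀ n : ℕ, ∫⁻ x in ball a (r + n + 1) \ ball a (r + n), F x ∂μ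
      ≤ C * ENNReal.ofReal (Real.exp θ) * ENNReal.ofReal (Real.exp ((θ - ω) * r))
          * ENNReal.ofReal (Real.exp (θ - ω)) ^ n := by
    intro n
    have hn : (0 : ℝ) ≤ n := n.cast_nonneg
    calc ∫⁻ x in ball a (r + n + 1) \ ball a (r + n), F x ∂μ
        ≤ ENNReal.ofReal (Real.exp (-ω * (r + n)))
            * (C * ENNReal.ofReal (Real.exp (θ * (r + n + 1)))) :=
          (setLIntegral_ball_diff_ball_exp_mul_le hp hω (by linarith) a g).trans
            (by gcongr; exact hg _ (by linarith))
      _ = C * ENNReal.ofReal (Real.exp (θ + (θ - ω) * r + n * (θ - ω))) := by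
          rw [mul_left_comm, ← ENNReal.ofReal_exp_add]; ring_nf
      _ = _ := by
          rw [ENNReal.ofReal_exp_add, ENNReal.ofReal_exp_add, Real.exp_nat_mul,
            ENNReal.ofReal_pow (Real.exp_nonneg _)]
          ring
  calc ∫⁻ x in {x | r ≤ dist a x}, F x ∂μ
      ≤ ∫⁻ x in ⋃ n : ℕ, ball a (r + n + 1) \ ball a (r + n), F x ∂μ :=
        lintegral_mono_set (setOf_le_dist_subset_iUnion_ball_diff_ball a)
    _ ≤ ∑' n : ℕ, ∫⁻ x in ball a (r + n + 1) \ ball a (r + n), F x ∂μ := lintegral_iUnion_le _ _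
    _ ≤ ∑' n : ℕ, C * ENNReal.ofReal (Real.exp θ) * ENNReal.ofReal (Real.exp ((θ - ω) * r))
          * ENNReal.ofReal (Real.exp (θ - ω)) ^ n := ENNReal.tsum_le_tsum hannulus
    _ = _ := by rw [ENNReal.tsum_mul_left, ENNReal.tsum_geometric]; ring

end Tail

theorem exp_decay_mul_uniformlyLocalL1_tail_tendsto_zero_general
    {X : Type*} [MetricSpace X] [MeasurableSpace X] [BorelSpace X]
    (μ : Measure X) (r₀ θ w₂ : ℝ) (hr₀ : 0 < r₀) (hθ : 0 < θ)
    (hgrowth : ∀ (a : X) (r : ℝ), 0 < r → μ (ball a r) ≤ ENNReal.ofReal (w₂ * Real.exp (θ * r)))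
    (hVi : ∀ r : ℝ, 0 < r → 0 < ⨅ x : X, μ (ball x r))
    (p ω : ℝ) (hp : 1 ≤ p) (hω : θ < ω) :
    ∀ ε : ℝ≥0∞, 0 < ε → ∃ R : ℝ, ∀ r : ℝ, R ≤ r → ∀ (a : X) (f : X → ℝ),
      (⨆ x : X, ∫⁻ y in ball x r₀, (‖f y‖₊ : ℝ≥0∞) ∂μ) ≤ 1 →
      ∫⁻ x in {x : X | r ≤ dist a x},
          ENNReal.ofReal (Real.exp (-ω * dist a x ^ p)) * (‖f x‖₊ : ℝ≥0∞) ∂μ ≤ ε := by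
  intro ε hε
  set δ : ℝ≥0 := ⟨r₀ / 4, by positivity⟩
  have hδ : (δ : ℝ) = r₀ / 4 := rfl
  have hV : ⨅ x : X, μ (ball x δ) ≠ 0 := (hVi δ (by rw [hδ]; positivity)).ne'
  set C := ENNReal.ofReal (w₂ * Real.exp (θ * δ)) / ⨅ x : X, μ (ball x δ)
  have hq : ENNReal.ofReal (Real.exp (θ - ω)) < 1 := by
    rw [ENNReal.ofReal_lt_one, Real.exp_lt_one_iff]; linarith
  have hK : C * ENNReal.ofReal (Real.exp θ) * (1 - ENNReal.ofReal (Real.exp (θ - ω)))⁻¹ ≠ ∞ :=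
    ENNReal.mul_ne_top (ENNReal.mul_ne_top (ENNReal.div_ne_top ENNReal.ofReal_ne_top hV)
      ENNReal.ofReal_ne_top) (ENNReal.inv_ne_top.mpr (tsub_pos_of_lt hq).ne')
  obtain ⟨R, hR⟩ := eventually_atTop.mp
    ((tendsto_mul_ofReal_exp_mul_atTop_nhds_zero hK (sub_neg.mpr hω)).eventually (Iic_mem_nhds hε))
  refine ⟨max R 1, fun r hr a f hf => ?_⟩
  have hball : ∀ R' : ℝ, r ≤ R' → ∫⁻ x in ball a R', (‖f x‖₊ : ℝ≥0∞) ∂μ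
      ≤ C * ENNReal.ofReal (Real.exp (θ * R')) := fun R' hR' =>
    setLIntegral_ball_le_of_measure_ball_le μ (by rw [hδ]; linarith) hV
      (hgrowth a _ (by linarith [le_of_max_le_right hr, δ.2])) _ hf
  exact (setLIntegral_le_dist_exp_mul_le hp (hθ.trans hω).le (le_of_max_le_right hr) a _ C
    hball).trans (hR r (le_of_max_le_left hr))

/-- The tail integrals `∫_{d(a,x) ≥ r} exp(-ω d(a,x)^p) |f(x)| dx` tend to `0`
as `r → ∞`, uniformly in `a ∈ X` and in `f` in the unit ball of the
uniformly local `L¹` space. -/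
theorem exp_decay_mul_uniformlyLocalL1_tail_tendsto_zero
    {X : Type*} [MetricSpace X] [MeasurableSpace X] [BorelSpace X]
    (μ : Measure X) (r₀ θ w₂ : ℝ) (hr₀ : 0 < r₀) (hθ : 0 < θ) (hw₂ : 0 < w₂)
    (hgrowth : ∀ (a : X) (r : ℝ), 0 < r → μ (ball a r) ≤ ENNReal.ofReal (w₂ * Real.exp (θ * r)))
    (hVi : ∀ r : ℝ, 0 < r → 0 < ⨅ x : X, μ (ball x r))
    (p ω : ℝ) (hp : 1 ≤ p) (hω : θ < ω) :
    ∀ ε : ℝ≥0∞, 0 < ε → ∃ R : ℝ, ∀ r : ℝ, R ≤ r → ∀ (a : X) (f : X → ℝ),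
      (⨆ x : X, ∫⁻ y in ball x r₀, (‖f y‖₊ : ℝ≥0∞) ∂μ) ≤ 1 →
      ∫⁻ x in {x : X | r ≤ dist a x},
          ENNReal.ofReal (Real.exp (-ω * dist a x ^ p)) * (‖f x‖₊ : ℝ≥0∞) ∂μ ≤ ε :=
  exp_decay_mul_uniformlyLocalL1_tail_tendsto_zero_general μ r₀ θ w₂ hr₀ hθ hgrowth hVi p ω hp hω
end

section
/- Let α₁, α₂ < ν be real numbers with α₁ + α₂ ≠ ν. Then there exist constants c', c'' > 0 depending only on α₁, α₂, ν such that for any a ∈ ℝ^ν, r > 0, and x ∈ B(a,r) with x ≠ 0, one has ∫_{B(a,r)} |x−z|^{−α₁}|z|^{−α₂} dz ≤ c'·|x|^{ν−α₁−α₂} + c''·(|a|+r)^{ν−α₁−α₂}. -/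
/-!
Enlarge `B(a,r)` to `B(0,R)` with `R = |a| + r` and substitute `z = |x| u`: the integral becomes
`|x|^(ν-α₁-α₂) ∫_{B(0,R/|x|)} |e-u|^(-α₁) |u|^(-α₂) du` with `e = x/|x|` a unit vector.
On `B(0,2)` the integrand is dominated by multiples of `|e-u|^(-α₁)` and `|u|^(-α₂)`, which are
integrable near their singularities because `α₁, α₂ < ν`. For `|u| ≥ 2` one has
`|u|/2 ≤ |e-u| ≤ 3|u|`, so the integrand is comparable to `|u|^(-(α₁+α₂))`. If `α₁ + α₂ < ν`
its integral over `B(0,R/|x|)` is a multiple of `(R/|x|)^(ν-α₁-α₂)`, which produces the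
`R`-term; if `α₁ + α₂ > ν` it is integrable at infinity and contributes to the `|x|`-term.
-/

open MeasureTheory Metric Set Module
open scoped ENNReal

theorem rpow_neg_le_of_mul_le_of_le_mul {α c₁ c₂ t x : ℝ} (hc₁ : 0 < c₁) (hx : 0 < x)
    (h₁ : c₁ * x ≤ t) (h₂ : t ≤ c₂ * x) :
    t ^ (-α) ≤ (c₁ ^ (-α) + c₂ ^ (-α)) * x ^ (-α) := by
  have ht : 0 < t := (mul_pos hc₁ hx).trans_le h₁
  have hc₂ : 0 ≤ c₂ := nonneg_of_mul_nonneg_left (ht.le.trans h₂) hx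
  rw [add_mul, ← Real.mul_rpow hc₁.le hx.le, ← Real.mul_rpow hc₂ hx.le]
  rcases le_total 0 α with hα | hα
  · have := Real.rpow_le_rpow_of_nonpos (mul_pos hc₁ hx) h₁ (neg_nonpos.2 hα)
    linarith [Real.rpow_nonneg (mul_nonneg hc₂ hx.le) (-α)]
  · have := Real.rpow_le_rpow ht.le h₂ (neg_nonneg.2 hα)
    linarith [Real.rpow_nonneg (mul_pos hc₁ hx).le (-α)]

section AddHaar

variable {E : Type*} [NormedAddCommGroup E] [NormedSpace ℝ E] [FiniteDimensional ℝ E]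
  [MeasurableSpace E] [BorelSpace E] (μ : Measure E) [μ.IsAddHaarMeasure]

theorem setLIntegral_ball_zero_eq_mul_comp_smul (f : E → ℝ≥0∞) {s : ℝ} (hs : 0 < s) (ρ : ℝ) :
    ∫⁻ z in ball 0 (s * ρ), f z ∂μ =
      ENNReal.ofReal (s ^ finrank ℝ E) * ∫⁻ u in ball 0 ρ, f (s • u) ∂μ := by
  have he := measurableEmbedding_const_smul₀ (α := E) hs.ne'
  have hd : 0 < s ^ finrank ℝ E := pow_pos hs _
  have hpre : (s • ·) ⁻¹' ball (0 : E) (s * ρ) = ball 0 ρ := by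
    ext u; simp [norm_smul, abs_of_pos hs, mul_lt_mul_iff_right₀ hs]
  rw [← hpre, ← he.lintegral_map, ← he.restrict_map, Measure.map_addHaar_smul μ hs.ne',
    Measure.restrict_smul, lintegral_smul_measure, abs_of_pos (inv_pos.2 hd), smul_eq_mul,
    ← mul_assoc, ← ENNReal.ofReal_mul hd.le, mul_inv_cancel₀ hd.ne', ENNReal.ofReal_one, one_mul]

theorem setLIntegral_ball_sub_eq (e : E) (ρ : ℝ) (f : ℝ → ℝ≥0∞) :
    ∫⁻ u in ball e ρ, f ‖e - u‖ ∂μ = ∫⁻ v in ball 0 ρ, f ‖v‖ ∂μ := by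
  rw [← (μ.measurePreserving_sub_left e).setLIntegral_comp_preimage_emb
    (measurableEmbedding_subLeft e)]
  have : (e - ·) ⁻¹' ball e ρ = ball 0 ρ := by ext v; simp [dist_eq_norm]
  simp only [this, sub_sub_cancel]

theorem setLIntegral_ball_zero_norm_rpow_neg {γ ρ : ℝ} (hρ : 0 < ρ) :
    ∫⁻ z in ball 0 ρ, ENNReal.ofReal (‖z‖ ^ (-γ)) ∂μ =
      ENNReal.ofReal (ρ ^ ((finrank ℝ E : ℝ) - γ)) *
        ∫⁻ z in ball 0 1, ENNReal.ofReal (‖z‖ ^ (-γ)) ∂μ := by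
  rw [← mul_one ρ, setLIntegral_ball_zero_eq_mul_comp_smul μ _ hρ, mul_one,
    ← lintegral_const_mul' _ _ ENNReal.ofReal_ne_top,
    ← lintegral_const_mul' _ _ ENNReal.ofReal_ne_top]
  refine setLIntegral_congr_fun measurableSet_ball fun u _ => ?_
  rw [← ENNReal.ofReal_mul (by positivity), ← ENNReal.ofReal_mul (by positivity), norm_smul,
    Real.norm_of_nonneg hρ.le, Real.mul_rpow hρ.le (norm_nonneg u), ← mul_assoc,
    ← Real.rpow_natCast, ← Real.rpow_add hρ, sub_eq_add_neg]

theorem lintegral_ball_zero_norm_rpow_neg_lt_top (hd : 1 ≤ finrank ℝ E) {γ : ℝ}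
    (hγ : γ < finrank ℝ E) (ρ : ℝ) :
    ∫⁻ z in ball 0 ρ, ENNReal.ofReal (‖z‖ ^ (-γ)) ∂μ < ∞ :=
  Integrable.lintegral_lt_top <| integrableOn_ball_of_norm_le_rpow (C := 1) hd hγ
    (Filter.Eventually.of_forall fun z => by
      rw [one_mul, Real.norm_of_nonneg (Real.rpow_nonneg (norm_nonneg z) _)])
    (measurable_norm.pow_const _).aestronglyMeasurable

theorem lintegral_compl_ball_zero_norm_rpow_neg_lt_top {γ : ℝ} (hγ : finrank ℝ E < γ) :
    ∫⁻ z in (ball 0 1)ᶜ, ENNReal.ofReal (‖z‖ ^ (-γ)) ∂μ < ∞ := by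
  have hle : ∀ z ∈ (ball (0 : E) 1)ᶜ, ENNReal.ofReal (‖z‖ ^ (-γ)) ≤
      ENNReal.ofReal ((1 / 2) ^ (-γ) + 3 ^ (-γ)) * ENNReal.ofReal ((1 + ‖z‖) ^ (-γ)) := by
    intro z hz
    have hz1 : 1 ≤ ‖z‖ := by simpa using hz
    rw [← ENNReal.ofReal_mul (by positivity)]
    exact ENNReal.ofReal_le_ofReal
      (rpow_neg_le_of_mul_le_of_le_mul (by norm_num) (by positivity) (by linarith) (by linarith))
  calc ∫⁻ z in (ball 0 1)ᶜ, ENNReal.ofReal (‖z‖ ^ (-γ)) ∂μ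
      ≤ ∫⁻ z, ENNReal.ofReal ((1 / 2) ^ (-γ) + 3 ^ (-γ)) *
          ENNReal.ofReal ((1 + ‖z‖) ^ (-γ)) ∂μ :=
        (setLIntegral_mono' measurableSet_ball.compl hle).trans (setLIntegral_le_lintegral _ _)
    _ < ∞ := by
        rw [lintegral_const_mul' _ _ ENNReal.ofReal_ne_top]
        exact ENNReal.mul_lt_top ENNReal.ofReal_lt_top (finite_integral_one_add_norm hγ)

end AddHaar

section TwoCenterKernel

variable {E : Type*} [NormedAddCommGroup E]

noncomputable def twoCenterKernel (α₁ α₂ : ℝ) (x z : E) : ℝ≥0∞ :=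
  ENNReal.ofReal (‖x - z‖ ^ (-α₁) * ‖z‖ ^ (-α₂))

variable {α₁ α₂ : ℝ}

theorem twoCenterKernel_smul_smul [NormedSpace ℝ E] {s : ℝ} (hs : 0 < s) (x z : E) :
    twoCenterKernel α₁ α₂ (s • x) (s • z) =
      ENNReal.ofReal (s ^ (-α₁ - α₂)) * twoCenterKernel α₁ α₂ x z := by
  rw [twoCenterKernel, twoCenterKernel, ← ENNReal.ofReal_mul (by positivity), ← smul_sub,
    norm_smul, norm_smul, Real.norm_of_nonneg hs.le, Real.mul_rpow hs.le (norm_nonneg _),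
    Real.mul_rpow hs.le (norm_nonneg _), sub_eq_add_neg (-α₁), Real.rpow_add hs]
  ring_nf

theorem twoCenterKernel_le_of_norm_lt_two {e u : E} (he : ‖e‖ = 1) (hu : ‖u‖ < 2) :
    twoCenterKernel α₁ α₂ e u ≤
      ENNReal.ofReal ((1 / 2) ^ (-α₂) + 3 ^ (-α₂)) * ENNReal.ofReal (‖e - u‖ ^ (-α₁)) +
        ENNReal.ofReal ((1 / 2) ^ (-α₁) + 3 ^ (-α₁)) * ENNReal.ofReal (‖u‖ ^ (-α₂)) := by
  have h₁ := norm_sub_norm_le e u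
  have h₂ := norm_sub_le e u
  rw [twoCenterKernel, ← ENNReal.ofReal_mul (by positivity),
    ← ENNReal.ofReal_mul (by positivity)]
  -- `‖e - u‖ + ‖u‖ ≥ 1`, so the larger of the two distances lies in `[1/2, 3]`.
  rcases le_total ‖e - u‖ ‖u‖ with h | h
  · have hu' : ‖u‖ ^ (-α₂) ≤ (1 / 2) ^ (-α₂) + 3 ^ (-α₂) := by
      simpa only [Real.one_rpow, mul_one] using rpow_neg_le_of_mul_le_of_le_mul (α := α₂)
        (c₁ := 1 / 2) (c₂ := 3) (t := ‖u‖) (by norm_num) one_pos (by linarith) (by linarith)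
    rw [mul_comm]
    exact le_add_right (ENNReal.ofReal_le_ofReal (mul_le_mul_of_nonneg_right hu' (by positivity)))
  · have heu : ‖e - u‖ ^ (-α₁) ≤ (1 / 2) ^ (-α₁) + 3 ^ (-α₁) := by
      simpa only [Real.one_rpow, mul_one] using rpow_neg_le_of_mul_le_of_le_mul (α := α₁)
        (c₁ := 1 / 2) (c₂ := 3) (t := ‖e - u‖) (by norm_num) one_pos (by linarith) (by linarith)
    exact le_add_left (ENNReal.ofReal_le_ofReal (mul_le_mul_of_nonneg_right heu (by positivity)))

theorem twoCenterKernel_le_of_two_le_norm {e u : E} (he : ‖e‖ = 1) (hu : 2 ≤ ‖u‖) :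
    twoCenterKernel α₁ α₂ e u ≤
      ENNReal.ofReal ((1 / 2) ^ (-α₁) + 3 ^ (-α₁)) * ENNReal.ofReal (‖u‖ ^ (-(α₁ + α₂))) := by
  have h₁ := norm_sub_norm_le u e
  have h₂ := norm_sub_le e u
  rw [norm_sub_rev] at h₁
  have hu₀ : 0 < ‖u‖ := by linarith
  have heu := rpow_neg_le_of_mul_le_of_le_mul (α := α₁) (c₁ := 1 / 2) (c₂ := 3) (t := ‖e - u‖)
    (by norm_num) hu₀ (by linarith) (by linarith)
  rw [twoCenterKernel, ← ENNReal.ofReal_mul (by positivity), neg_add, Real.rpow_add hu₀,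
    ← mul_assoc]
  exact ENNReal.ofReal_le_ofReal (mul_le_mul_of_nonneg_right heu (by positivity))

variable [MeasurableSpace E] [BorelSpace E] (μ : Measure E)

theorem setLIntegral_twoCenterKernel_le_of_subset_compl_ball_two {e : E} (he : ‖e‖ = 1)
    {S : Set E} (hS : S ⊆ (ball 0 2)ᶜ) :
    ∫⁻ u in S, twoCenterKernel α₁ α₂ e u ∂μ ≤
      ENNReal.ofReal ((1 / 2) ^ (-α₁) + 3 ^ (-α₁)) *
        ∫⁻ u in S, ENNReal.ofReal (‖u‖ ^ (-(α₁ + α₂))) ∂μ := by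
  rw [← lintegral_const_mul' _ _ ENNReal.ofReal_ne_top]
  exact setLIntegral_mono (by fun_prop) fun u hu =>
    twoCenterKernel_le_of_two_le_norm he (by simpa using hS hu)

variable [NormedSpace ℝ E] [FiniteDimensional ℝ E] [μ.IsAddHaarMeasure]

theorem setLIntegral_ball_zero_twoCenterKernel_smul {s : ℝ} (hs : 0 < s) (x : E) (ρ : ℝ) :
    ∫⁻ z in ball 0 (s * ρ), twoCenterKernel α₁ α₂ (s • x) z ∂μ =
      ENNReal.ofReal (s ^ ((finrank ℝ E : ℝ) - α₁ - α₂)) *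
        ∫⁻ u in ball 0 ρ, twoCenterKernel α₁ α₂ x u ∂μ := by
  rw [setLIntegral_ball_zero_eq_mul_comp_smul μ _ hs]
  simp_rw [twoCenterKernel_smul_smul hs]
  rw [lintegral_const_mul' _ _ ENNReal.ofReal_ne_top, ← mul_assoc,
    ← ENNReal.ofReal_mul (by positivity), ← Real.rpow_natCast, ← Real.rpow_add hs]
  ring_nf

theorem setLIntegral_ball_two_twoCenterKernel_le {e : E} (he : ‖e‖ = 1) :
    ∫⁻ u in ball 0 2, twoCenterKernel α₁ α₂ e u ∂μ ≤
      ENNReal.ofReal ((1 / 2) ^ (-α₂) + 3 ^ (-α₂)) *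
          ∫⁻ v in ball 0 3, ENNReal.ofReal (‖v‖ ^ (-α₁)) ∂μ +
        ENNReal.ofReal ((1 / 2) ^ (-α₁) + 3 ^ (-α₁)) *
          ∫⁻ v in ball 0 2, ENNReal.ofReal (‖v‖ ^ (-α₂)) ∂μ := by
  have hsub : ball (0 : E) 2 ⊆ ball e 3 := ball_subset_ball' (by simp [he]; norm_num)
  calc ∫⁻ u in ball 0 2, twoCenterKernel α₁ α₂ e u ∂μ
      ≤ ∫⁻ u in ball 0 2,
          ENNReal.ofReal ((1 / 2) ^ (-α₂) + 3 ^ (-α₂)) * ENNReal.ofReal (‖e - u‖ ^ (-α₁)) +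
            ENNReal.ofReal ((1 / 2) ^ (-α₁) + 3 ^ (-α₁)) * ENNReal.ofReal (‖u‖ ^ (-α₂)) ∂μ :=
        setLIntegral_mono (by fun_prop) fun u hu =>
          twoCenterKernel_le_of_norm_lt_two he (mem_ball_zero_iff.1 hu)
    _ ≤ _ := by
        rw [lintegral_add_left (by fun_prop), lintegral_const_mul' _ _ ENNReal.ofReal_ne_top,
          lintegral_const_mul' _ _ ENNReal.ofReal_ne_top,
          ← setLIntegral_ball_sub_eq μ e 3 fun t => ENNReal.ofReal (t ^ (-α₁))]
        gcongr

theorem exists_setLIntegral_ball_twoCenterKernel_le (hd : 1 ≤ finrank ℝ E)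
    (h₁ : α₁ < finrank ℝ E) (h₂ : α₂ < finrank ℝ E) (hcrit : α₁ + α₂ ≠ finrank ℝ E) :
    ∃ A B : ℝ≥0∞, A ≠ ∞ ∧ B ≠ ∞ ∧ ∀ e : E, ‖e‖ = 1 → ∀ ρ : ℝ, 0 < ρ →
      ∫⁻ u in ball 0 ρ, twoCenterKernel α₁ α₂ e u ∂μ ≤
        A + B * ENNReal.ofReal (ρ ^ ((finrank ℝ E : ℝ) - α₁ - α₂)) := by
  set M := ENNReal.ofReal ((1 / 2) ^ (-α₁) + 3 ^ (-α₁))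
  set A₀ := ENNReal.ofReal ((1 / 2) ^ (-α₂) + 3 ^ (-α₂)) *
      ∫⁻ v in ball 0 3, ENNReal.ofReal (‖v‖ ^ (-α₁)) ∂μ +
    M * ∫⁻ v in ball 0 2, ENNReal.ofReal (‖v‖ ^ (-α₂)) ∂μ
  have hA₀ : A₀ ≠ ∞ := ENNReal.add_ne_top.2
    ⟨ENNReal.mul_ne_top ENNReal.ofReal_ne_top
      (lintegral_ball_zero_norm_rpow_neg_lt_top μ hd h₁ 3).ne,
     ENNReal.mul_ne_top ENNReal.ofReal_ne_top
      (lintegral_ball_zero_norm_rpow_neg_lt_top μ hd h₂ 2).ne⟩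
  have hsplit : ∀ e : E, ‖e‖ = 1 → ∀ ρ, ∫⁻ u in ball 0 ρ, twoCenterKernel α₁ α₂ e u ∂μ ≤
      A₀ + M * ∫⁻ u in ball 0 ρ \ ball 0 2, ENNReal.ofReal (‖u‖ ^ (-(α₁ + α₂))) ∂μ := by
    intro e he ρ
    calc ∫⁻ u in ball 0 ρ, twoCenterKernel α₁ α₂ e u ∂μ
        ≤ ∫⁻ u in ball 0 2 ∪ ball 0 ρ \ ball 0 2, twoCenterKernel α₁ α₂ e u ∂μ :=
          lintegral_mono_set fun u hu => by by_cases h : u ∈ ball (0 : E) 2 <;> simp_all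
      _ ≤ _ := (lintegral_union_le _ _ _).trans <| add_le_add
          (setLIntegral_ball_two_twoCenterKernel_le μ he)
          (setLIntegral_twoCenterKernel_le_of_subset_compl_ball_two μ he fun _ hu => hu.2)
  rcases hcrit.lt_or_gt with hlt | hgt
  · refine ⟨A₀, M * ∫⁻ v in ball 0 1, ENNReal.ofReal (‖v‖ ^ (-(α₁ + α₂))) ∂μ, hA₀,
      ENNReal.mul_ne_top ENNReal.ofReal_ne_top
        (lintegral_ball_zero_norm_rpow_neg_lt_top μ hd hlt 1).ne, fun e he ρ hρ => ?_⟩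
    refine (hsplit e he ρ).trans (add_le_add_right ?_ _)
    rw [mul_assoc, mul_comm (∫⁻ _ in _, _ ∂μ), sub_sub, ← setLIntegral_ball_zero_norm_rpow_neg μ hρ]
    gcongr
    exact sdiff_subset
  · refine ⟨A₀ + M * ∫⁻ v in (ball 0 1)ᶜ, ENNReal.ofReal (‖v‖ ^ (-(α₁ + α₂))) ∂μ, 0,
      ENNReal.add_ne_top.2 ⟨hA₀, ENNReal.mul_ne_top ENNReal.ofReal_ne_top
        (lintegral_compl_ball_zero_norm_rpow_neg_lt_top μ hgt).ne⟩, ENNReal.zero_ne_top,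
      fun e he ρ hρ => ?_⟩
    rw [zero_mul, add_zero]
    refine (hsplit e he ρ).trans ?_
    gcongr
    exact fun u hu h => hu.2 (ball_subset_ball one_le_two h)

end TwoCenterKernel

theorem ENNReal.mul_ofReal_add_mul_ofReal_le {A B : ℝ≥0∞} (hA : A ≠ ∞) (hB : B ≠ ∞) {u v : ℝ}
    (hu : 0 ≤ u) (hv : 0 ≤ v) :
    A * ENNReal.ofReal u + B * ENNReal.ofReal v ≤
      ENNReal.ofReal ((A.toReal + 1) * u + (B.toReal + 1) * v) := by
  rw [← ENNReal.ofReal_toReal hA, ← ENNReal.ofReal_toReal hB,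
    ← ENNReal.ofReal_mul ENNReal.toReal_nonneg, ← ENNReal.ofReal_mul ENNReal.toReal_nonneg,
    ← ENNReal.ofReal_add (by positivity) (by positivity),
    ENNReal.toReal_ofReal ENNReal.toReal_nonneg, ENNReal.toReal_ofReal ENNReal.toReal_nonneg]
  exact ENNReal.ofReal_le_ofReal (by nlinarith)

/-- For `α₁, α₂ < ν` with `α₁ + α₂ ≠ ν`, there are constants `c', c'' > 0`
depending only on `α₁, α₂, ν` such that for any ball `B(a,r)` and any nonzero
`x ∈ B(a,r)`,
`∫_{B(a,r)} |x-z|^{-α₁} |z|^{-α₂} dz ≤ c' |x|^{ν-α₁-α₂} + c'' (|a|+r)^{ν-α₁-α₂}`. -/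
theorem riesz_two_center_bound_off_critical
    (ν : ℕ) (hν : 1 ≤ ν) (α₁ α₂ : ℝ) (h₁ : α₁ < ν) (h₂ : α₂ < ν)
    (hcrit : α₁ + α₂ ≠ ν) :
    ∃ c' c'' : ℝ, 0 < c' ∧ 0 < c'' ∧
      ∀ (a : EuclideanSpace ℝ (Fin ν)) (r : ℝ), 0 < r →
      ∀ x ∈ ball a r, x ≠ 0 →
        (∫⁻ z in ball a r,
            ENNReal.ofReal (‖x - z‖ ^ (-α₁) * ‖z‖ ^ (-α₂)) ∂volume)
          ≤ ENNReal.ofReal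
              (c' * ‖x‖ ^ ((ν : ℝ) - α₁ - α₂)
                + c'' * (‖a‖ + r) ^ ((ν : ℝ) - α₁ - α₂)) := by
  have hd : finrank ℝ (EuclideanSpace ℝ (Fin ν)) = ν := finrank_euclideanSpace_fin
  obtain ⟨A, B, hA, hB, hbound⟩ := exists_setLIntegral_ball_twoCenterKernel_le
    (volume : Measure (EuclideanSpace ℝ (Fin ν))) (α₁ := α₁) (α₂ := α₂)
    (by rwa [hd]) (by rwa [hd]) (by rwa [hd]) (by rwa [hd])
  rw [hd] at hbound
  refine ⟨A.toReal + 1, B.toReal + 1, by positivity, by positivity, fun a r _ x _ hx => ?_⟩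
  have hs : 0 < ‖x‖ := norm_pos_iff.2 hx
  have hR : ‖x‖ * ((‖a‖ + r) / ‖x‖) = ‖a‖ + r := mul_div_cancel₀ _ hs.ne'
  have hball : ball a r ⊆ ball 0 (‖x‖ * ((‖a‖ + r) / ‖x‖)) :=
    hR.symm ▸ ball_subset_ball' (by rw [dist_zero_right, add_comm])
  calc ∫⁻ z in ball a r, ENNReal.ofReal (‖x - z‖ ^ (-α₁) * ‖z‖ ^ (-α₂))
      ≤ ∫⁻ z in ball 0 (‖x‖ * ((‖a‖ + r) / ‖x‖)), twoCenterKernel α₁ α₂ (‖x‖ • ‖x‖⁻¹ • x) z := by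
        rw [smul_inv_smul₀ hs.ne']
        exact lintegral_mono_set hball
    _ = ENNReal.ofReal (‖x‖ ^ ((ν : ℝ) - α₁ - α₂)) *
          ∫⁻ u in ball 0 ((‖a‖ + r) / ‖x‖), twoCenterKernel α₁ α₂ (‖x‖⁻¹ • x) u := by
        rw [setLIntegral_ball_zero_twoCenterKernel_smul volume hs, hd]
    _ ≤ ENNReal.ofReal (‖x‖ ^ ((ν : ℝ) - α₁ - α₂)) *
          (A + B * ENNReal.ofReal (((‖a‖ + r) / ‖x‖) ^ ((ν : ℝ) - α₁ - α₂))) := by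
        gcongr
        exact hbound _ (by rw [norm_smul, norm_inv, norm_norm, inv_mul_cancel₀ hs.ne'])
          _ (by positivity)
    _ = A * ENNReal.ofReal (‖x‖ ^ ((ν : ℝ) - α₁ - α₂)) +
          B * ENNReal.ofReal ((‖a‖ + r) ^ ((ν : ℝ) - α₁ - α₂)) := by
        rw [mul_add, mul_comm, ← mul_assoc, mul_comm _ B, mul_assoc B,
          ← ENNReal.ofReal_mul (by positivity), ← Real.mul_rpow hs.le (by positivity), hR]
    _ ≤ _ := ENNReal.mul_ofReal_add_mul_ofReal_le hA hB (by positivity) (by positivity)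
end

section
/- Let α₁, α₂ < ν with α₁ + α₂ = ν. Then there exist constants c', c'' > 0 depending only on α₁, α₂, ν such that for any a ∈ ℝ^ν, r > 0, and x ∈ B(a,r) with x ≠ 0, one has ∫_{B(a,r)} |x−z|^{−α₁}|z|^{−α₂} dz ≤ c'·log((|a|+r)/|x|) + c''. -/
open MeasureTheory Metric
open scoped ENNReal

section Helpers

open Set

local notation "dim" => Module.finrank ℝ


lemma polar_lintegral {E : Type*} [NormedAddCommGroup E] [NormedSpace ℝ E]
    [MeasurableSpace E] [BorelSpace E] [FiniteDimensional ℝ E] [Nontrivial E]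
    (μ : Measure E) [μ.IsAddHaarMeasure] (f : ℝ → ℝ≥0∞) (hf : Measurable f) :
    ∫⁻ x, f ‖x‖ ∂μ
      = μ.toSphere univ * ∫⁻ r in Ioi (0:ℝ), ENNReal.ofReal (r ^ (dim E - 1)) * f r := by
  have h := μ.measurePreserving_homeomorphUnitSphereProd
  have hmeas : Measurable fun p : sphere (0:E) 1 × Ioi (0:ℝ) => f p.2.1 :=
    hf.comp (measurable_subtype_coe.comp measurable_snd)
  calc ∫⁻ x, f ‖x‖ ∂μ = ∫⁻ x in {(0:E)}ᶜ, f ‖x‖ ∂μ := by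
        rw [restrict_compl_singleton]
    _ = ∫⁻ x : ({(0:E)}ᶜ : Set E), f ‖(x:E)‖ ∂(μ.comap (↑)) :=
        (lintegral_subtype_comap (measurableSet_singleton _).compl _).symm
    _ = ∫⁻ p : sphere (0:E) 1 × Ioi (0:ℝ), f p.2.1
          ∂(μ.toSphere.prod (.volumeIoiPow (dim E - 1))) := by
        rw [← h.lintegral_comp hmeas]
        simp [homeomorphUnitSphereProd_apply_snd_coe]
    _ = μ.toSphere univ * ∫⁻ r : Ioi (0:ℝ), f r.1 ∂(Measure.volumeIoiPow (dim E - 1)) := by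
        rw [lintegral_prod _ hmeas.aemeasurable]
        simp [lintegral_const, mul_comm]
    _ = μ.toSphere univ * ∫⁻ r in Ioi (0:ℝ), ENNReal.ofReal (r ^ (dim E - 1)) * f r := by
        rw [Measure.volumeIoiPow,
          lintegral_withDensity_eq_lintegral_mul _ (by fun_prop) (by fun_prop)]
        congr 1
        exact lintegral_subtype_comap measurableSet_Ioi
          (fun r => ENNReal.ofReal (r ^ (dim E - 1)) * f r)

lemma radial_lintegral {E : Type*} [NormedAddCommGroup E] [NormedSpace ℝ E]
    [MeasurableSpace E] [BorelSpace E] [FiniteDimensional ℝ E] [Nontrivial E]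
    (μ : Measure E) [μ.IsAddHaarMeasure] (γ s R : ℝ) (hs : 0 ≤ s)
    (hint : IntegrableOn (fun r => r ^ ((dim E : ℝ) - 1 + γ)) (Ioo s R) volume) :
    ∫⁻ z in ball (0:E) R \ ball 0 s, ENNReal.ofReal (‖z‖ ^ γ) ∂μ
      = μ.toSphere univ * ENNReal.ofReal (∫ r in Ioo s R, r ^ ((dim E : ℝ) - 1 + γ)) := by
  have hdim : ((dim E - 1 : ℕ) : ℝ) = (dim E : ℝ) - 1 := by
    rw [Nat.cast_sub Module.finrank_pos, Nat.cast_one]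
  set f : ℝ → ℝ≥0∞ := (Ioo s R).indicator (fun r => ENNReal.ofReal (r ^ γ)) with hf
  have hfm : Measurable f := Measurable.indicator (by fun_prop) measurableSet_Ioo
  have hTD : (ball (0:E) R \ ball 0 s : Set E) =ᵐ[μ] {z : E | ‖z‖ ∈ Ioo s R} := by
    rw [Filter.eventuallyEq_set]
    have hz : μ (sphere (0:E) s) = 0 := Measure.addHaar_sphere μ 0 s
    filter_upwards [measure_eq_zero_iff_ae_notMem.1 hz] with z hzs
    simp only [mem_diff, mem_ball, dist_zero_right, mem_setOf_eq, mem_Ioo, not_lt]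
    constructor
    · rintro ⟨h1, h2⟩
      refine ⟨lt_of_le_of_ne h2 ?_, h1⟩
      intro h; exact hzs (by simpa [mem_sphere_iff_norm] using h.symm)
    · rintro ⟨h1, h2⟩; exact ⟨h2, h1.le⟩
  calc ∫⁻ z in ball (0:E) R \ ball 0 s, ENNReal.ofReal (‖z‖ ^ γ) ∂μ
      = ∫⁻ z in {z : E | ‖z‖ ∈ Ioo s R}, ENNReal.ofReal (‖z‖ ^ γ) ∂μ :=
        setLIntegral_congr hTD
    _ = ∫⁻ z, f ‖z‖ ∂μ := by
        rw [hf, ← lintegral_indicator]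
        · rfl
        · exact measurableSet_Ioo.preimage measurable_norm
    _ = μ.toSphere univ * ∫⁻ r in Ioi (0:ℝ), ENNReal.ofReal (r ^ (dim E - 1)) * f r :=
        polar_lintegral μ f hfm
    _ = μ.toSphere univ * ENNReal.ofReal (∫ r in Ioo s R, r ^ ((dim E : ℝ) - 1 + γ)) := by
        congr 1
        have : ∀ r : ℝ, ENNReal.ofReal (r ^ (dim E - 1)) * f r
            = (Ioo s R).indicator
                (fun r => ENNReal.ofReal (r ^ (dim E - 1)) * ENNReal.ofReal (r ^ γ)) r := by
          intro r
          by_cases hr : r ∈ Ioo s R <;> simp [hf, indicator, hr]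
        simp only [this]
        have hsub : Ioo s R ∩ Ioi (0:ℝ) = Ioo s R :=
          inter_eq_left.2 (fun r hr => lt_of_le_of_lt hs hr.1)
        rw [lintegral_indicator measurableSet_Ioo, Measure.restrict_restrict measurableSet_Ioo,
          hsub]
        have h1 : ∫⁻ a in Ioo s R, ENNReal.ofReal (a ^ (dim E - 1)) * ENNReal.ofReal (a ^ γ)
            = ∫⁻ a in Ioo s R, ENNReal.ofReal (a ^ ((dim E : ℝ) - 1 + γ)) := by
          apply setLIntegral_congr_fun measurableSet_Ioo
          intro r hr
          have hr0 : 0 < r := lt_of_le_of_lt hs hr.1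
          beta_reduce
          rw [← ENNReal.ofReal_mul (by positivity), ← Real.rpow_natCast r (dim E - 1), hdim,
            ← Real.rpow_add hr0]
        rw [h1, ← ofReal_integral_eq_lintegral_ofReal hint ?_]
        filter_upwards [ae_restrict_mem measurableSet_Ioo] with r hr
        exact Real.rpow_nonneg (le_of_lt (lt_of_le_of_lt hs hr.1)) _

variable {ν : ℕ}

lemma euclid_nontrivial (hν : 1 ≤ ν) : Nontrivial (EuclideanSpace ℝ (Fin ν)) := by
  apply Module.nontrivial_of_finrank_pos (R := ℝ)
  rw [finrank_euclideanSpace_fin]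
  exact hν

lemma ball_rpow_lintegral (hν : 1 ≤ ν) {α ρ : ℝ} (hα : α < ν) (hρ : 0 < ρ) :
    ∫⁻ z in ball (0 : EuclideanSpace ℝ (Fin ν)) ρ, ENNReal.ofReal (‖z‖ ^ (-α)) ∂volume
      = (volume : Measure (EuclideanSpace ℝ (Fin ν))).toSphere univ
          * ENNReal.ofReal (ρ ^ ((ν : ℝ) - α) / ((ν : ℝ) - α)) := by
  haveI := euclid_nontrivial hν
  have hdim : (dim (EuclideanSpace ℝ (Fin ν)) : ℝ) = (ν : ℝ) := by
    rw [finrank_euclideanSpace_fin]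
  have hδ : (-1 : ℝ) < (ν : ℝ) - 1 + -α := by linarith
  have hint : IntegrableOn (fun r : ℝ => r ^ ((ν : ℝ) - 1 + -α)) (Ioo 0 ρ) volume :=
    (intervalIntegral.intervalIntegrable_rpow' hδ (a := 0) (b := ρ)).1.mono_set
      Ioo_subset_Ioc_self
  have h := radial_lintegral (volume : Measure (EuclideanSpace ℝ (Fin ν))) (-α) 0 ρ le_rfl
    (by rw [hdim]; exact hint)
  rw [ball_zero, diff_empty] at h
  rw [h, hdim]
  congr 2
  rw [← integral_Ioc_eq_integral_Ioo, ← intervalIntegral.integral_of_le hρ.le,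
    integral_rpow (Or.inl hδ)]
  have : (ν : ℝ) - 1 + -α + 1 = (ν : ℝ) - α := by ring
  rw [this, Real.zero_rpow (by linarith), sub_zero]

lemma annulus_lintegral (hν : 1 ≤ ν) {s R : ℝ} (hs : 0 < s) (hsR : s < R) :
    ∫⁻ z in ball (0 : EuclideanSpace ℝ (Fin ν)) R \ ball 0 s,
        ENNReal.ofReal (‖z‖ ^ (-(ν : ℝ))) ∂volume
      = (volume : Measure (EuclideanSpace ℝ (Fin ν))).toSphere univ
          * ENNReal.ofReal (Real.log (R / s)) := by
  haveI := euclid_nontrivial hν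
  have hdim : (dim (EuclideanSpace ℝ (Fin ν)) : ℝ) = (ν : ℝ) := by
    rw [finrank_euclideanSpace_fin]
  have hexp : (ν : ℝ) - 1 + -(ν : ℝ) = -1 := by ring
  have h0 : (0:ℝ) ∉ uIcc s R := by
    rw [Set.uIcc_of_le hsR.le]; intro h; exact absurd (mem_Icc.1 h).1 (not_le.2 hs)
  have hfun : (fun r : ℝ => r ^ ((ν : ℝ) - 1 + -(ν:ℝ))) = fun r : ℝ => r⁻¹ := by
    funext r; rw [hexp, Real.rpow_neg_one]
  have hint : IntegrableOn (fun r : ℝ => r ^ ((ν : ℝ) - 1 + -(ν:ℝ))) (Ioo s R) volume := by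
    rw [hfun]
    exact (intervalIntegral.intervalIntegrable_inv (f := fun x : ℝ => x) (fun x hx => ne_of_gt
      (lt_of_lt_of_le hs (by rw [Set.uIcc_of_le hsR.le] at hx; exact (mem_Icc.1 hx).1)))
      continuousOn_id).1.mono_set Ioo_subset_Ioc_self
  have h := radial_lintegral (volume : Measure (EuclideanSpace ℝ (Fin ν))) (-(ν:ℝ)) s R hs.le
    (by rw [hdim]; exact hint)
  rw [h, hdim]
  congr 2
  rw [hfun, ← integral_Ioc_eq_integral_Ioo, ← intervalIntegral.integral_of_le hsR.le,
    integral_inv h0]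

lemma translate_lintegral {ν : ℕ} (x : EuclideanSpace ℝ (Fin ν)) (ρ α : ℝ) :
    ∫⁻ z in ball x ρ, ENNReal.ofReal (‖x - z‖ ^ (-α)) ∂volume
      = ∫⁻ w in ball (0 : EuclideanSpace ℝ (Fin ν)) ρ, ENNReal.ofReal (‖w‖ ^ (-α)) ∂volume := by
  have hmp : MeasurePreserving (fun z : EuclideanSpace ℝ (Fin ν) => x - z) volume volume :=
    ⟨measurable_const.sub measurable_id, Measure.map_sub_left_eq_self volume x⟩
  have hemb : MeasurableEmbedding (fun z : EuclideanSpace ℝ (Fin ν) => x - z) :=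
    (MeasurableEquiv.subLeft x).measurableEmbedding
  have hpre : (fun z : EuclideanSpace ℝ (Fin ν) => x - z) ⁻¹' (ball 0 ρ) = ball x ρ := by
    ext z
    simp [mem_ball, dist_eq_norm, norm_sub_rev x z]
  rw [← hpre]
  exact hmp.setLIntegral_comp_preimage_emb hemb (fun w => ENNReal.ofReal (‖w‖ ^ (-α))) (ball 0 ρ)

end Helpers

/-- For `α₁, α₂ < ν` with `α₁ + α₂ = ν`, there are constants `c', c'' > 0`
depending only on `α₁, α₂, ν` such that for any ball `B(a,r)` and any nonzero
`x ∈ B(a,r)`,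
`∫_{B(a,r)} |x-z|^{-α₁} |z|^{-α₂} dz ≤ c' log((|a|+r)/|x|) + c''`. -/
theorem riesz_two_center_bound_critical
    (ν : ℕ) (hν : 1 ≤ ν) (α₁ α₂ : ℝ) (h₁ : α₁ < ν) (h₂ : α₂ < ν)
    (hcrit : α₁ + α₂ = ν) :
    ∃ c' c'' : ℝ, 0 < c' ∧ 0 < c'' ∧
      ∀ (a : EuclideanSpace ℝ (Fin ν)) (r : ℝ), 0 < r →
      ∀ x ∈ ball a r, x ≠ 0 →
        (∫⁻ z in ball a r,
            ENNReal.ofReal (‖x - z‖ ^ (-α₁) * ‖z‖ ^ (-α₂)) ∂volume)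
          ≤ ENNReal.ofReal (c' * Real.log ((‖a‖ + r) / ‖x‖) + c'') := by
  have hα₁ : 0 < α₁ := by linarith
  have hα₂ : 0 < α₂ := by linarith
  haveI := euclid_nontrivial hν
  set S := (volume : Measure (EuclideanSpace ℝ (Fin ν))).toSphere Set.univ with hS_def
  have hS_ne_top : S ≠ ⊤ := measure_ne_top _ _
  have hS_ne_zero : S ≠ 0 := by
    rw [hS_def, Measure.toSphere_apply_univ]
    exact mul_ne_zero (Nat.cast_ne_zero.2 (by rw [finrank_euclideanSpace_fin]; omega))
      (measure_ball_pos _ _ one_pos).ne'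
  set Sr := S.toReal with hSr_def
  have hSr : 0 < Sr := ENNReal.toReal_pos hS_ne_zero hS_ne_top
  have hSS : S = ENNReal.ofReal Sr := (ENNReal.ofReal_toReal hS_ne_top).symm
  have h4 : (0:ℝ) < 4 ^ α₁ := Real.rpow_pos_of_pos (by norm_num) _
  have hlog2 : 0 < Real.log 2 := Real.log_pos (by norm_num)
  refine ⟨Sr * 4 ^ α₁, Sr * (1/α₂) + Sr * (1/α₁) + Sr * (4 ^ α₁ * Real.log 2),
    mul_pos hSr h4, ?_, ?_⟩
  · have : 0 < 4 ^ α₁ * Real.log 2 := mul_pos h4 hlog2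
    positivity
  intro a r hr x hx hx0
  set m := ‖x‖ with hm_def
  have hm : 0 < m := norm_pos_iff.2 hx0
  set R := ‖a‖ + r with hR_def
  have hzR : ∀ z ∈ ball a r, ‖z‖ < R := by
    intro z hz
    calc ‖z‖ = ‖a + (z - a)‖ := by rw [add_sub_cancel]
    _ ≤ ‖a‖ + ‖z - a‖ := norm_add_le _ _
    _ < ‖a‖ + r := by
        rw [← dist_eq_norm]
        exact add_lt_add_right (mem_ball.1 hz) _
  have hmR : m < R := hzR x hx
  have hR : 0 < R := hm.trans hmR
  have hm2 : 0 < m/2 := half_pos hm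
  have hlognn : 0 ≤ Real.log (R/m) := Real.log_nonneg ((one_le_div hm).2 hmR.le)
  -- cover
  have hcover : ball a r ⊆ ball x (m/2) ∪ (ball (0 : EuclideanSpace ℝ (Fin ν)) (m/2)
      ∪ ((ball (0 : EuclideanSpace ℝ (Fin ν)) R \ ball 0 (m/2)) \ ball x (m/2))) := by
    intro z hz
    by_cases hA : z ∈ ball x (m/2)
    · exact Or.inl hA
    by_cases hB : z ∈ ball (0 : EuclideanSpace ℝ (Fin ν)) (m/2)
    · exact Or.inr (Or.inl hB)
    exact Or.inr (Or.inr ⟨⟨mem_ball_zero_iff.2 (hzR z hz), hB⟩, hA⟩)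
  refine le_trans (lintegral_mono_set hcover) ?_
  refine le_trans (lintegral_union_le _ _ _) ?_
  refine le_trans (add_le_add_right (lintegral_union_le _ _ _) _) ?_
  -- piece A
  have hA : ∫⁻ z in ball x (m/2),
      ENNReal.ofReal (‖x - z‖ ^ (-α₁) * ‖z‖ ^ (-α₂)) ∂volume
      ≤ ENNReal.ofReal (Sr * (1/α₂)) := by
    have hb : ∀ z ∈ ball x (m/2), ENNReal.ofReal (‖x - z‖ ^ (-α₁) * ‖z‖ ^ (-α₂))
        ≤ ENNReal.ofReal ((m/2) ^ (-α₂)) * ENNReal.ofReal (‖x - z‖ ^ (-α₁)) := by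
      intro z hz
      have hzn : m/2 ≤ ‖z‖ := by
        have hxz : ‖x - z‖ < m/2 := by
          rw [← dist_eq_norm]; exact mem_ball'.1 hz
        have h1 : ‖x‖ ≤ ‖x - z‖ + ‖z‖ := by
          calc ‖x‖ = ‖(x - z) + z‖ := by rw [sub_add_cancel]
          _ ≤ _ := norm_add_le _ _
        linarith
      rw [← ENNReal.ofReal_mul (Real.rpow_nonneg hm2.le _)]
      apply ENNReal.ofReal_le_ofReal
      rw [mul_comm ((m/2) ^ (-α₂))]
      exact mul_le_mul_of_nonneg_left
        (Real.rpow_le_rpow_of_nonpos hm2 hzn (neg_nonpos.2 hα₂.le))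
        (Real.rpow_nonneg (norm_nonneg _) _)
    refine le_trans (setLIntegral_mono (by fun_prop) hb) ?_
    rw [lintegral_const_mul _ (by fun_prop), translate_lintegral x (m/2) α₁,
      ball_rpow_lintegral hν h₁ hm2]
    have hmul : (m/2) ^ (-α₂) * (m/2) ^ α₂ = 1 := by
      rw [← Real.rpow_add hm2]; simp
    have he : (ν:ℝ) - α₁ = α₂ := by linarith
    rw [he, ← hS_def, hSS, ← ENNReal.ofReal_mul hSr.le, ← ENNReal.ofReal_mul (Real.rpow_nonneg hm2.le _)]
    apply ENNReal.ofReal_le_ofReal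
    have : (m/2) ^ (-α₂) * (Sr * ((m/2) ^ α₂ / α₂)) = Sr * (1/α₂) := by
      field_simp
      linear_combination hmul
    linarith [this]
  -- piece B
  have hB : ∫⁻ z in ball (0 : EuclideanSpace ℝ (Fin ν)) (m/2),
      ENNReal.ofReal (‖x - z‖ ^ (-α₁) * ‖z‖ ^ (-α₂)) ∂volume
      ≤ ENNReal.ofReal (Sr * (1/α₁)) := by
    have hb : ∀ z ∈ ball (0 : EuclideanSpace ℝ (Fin ν)) (m/2),
        ENNReal.ofReal (‖x - z‖ ^ (-α₁) * ‖z‖ ^ (-α₂))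
        ≤ ENNReal.ofReal ((m/2) ^ (-α₁)) * ENNReal.ofReal (‖z‖ ^ (-α₂)) := by
      intro z hz
      have hzn : ‖z‖ < m/2 := mem_ball_zero_iff.1 hz
      have hxz : m/2 ≤ ‖x - z‖ := by
        have h1 : ‖x‖ ≤ ‖x - z‖ + ‖z‖ := by
          calc ‖x‖ = ‖(x - z) + z‖ := by rw [sub_add_cancel]
          _ ≤ _ := norm_add_le _ _
        linarith
      rw [← ENNReal.ofReal_mul (Real.rpow_nonneg hm2.le _)]
      apply ENNReal.ofReal_le_ofReal
      exact mul_le_mul_of_nonneg_right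
        (Real.rpow_le_rpow_of_nonpos hm2 hxz (neg_nonpos.2 hα₁.le))
        (Real.rpow_nonneg (norm_nonneg _) _)
    refine le_trans (setLIntegral_mono (by fun_prop) hb) ?_
    rw [lintegral_const_mul _ (by fun_prop), ball_rpow_lintegral hν h₂ hm2]
    have hmul : (m/2) ^ (-α₁) * (m/2) ^ α₁ = 1 := by
      rw [← Real.rpow_add hm2]; simp
    have he : (ν:ℝ) - α₂ = α₁ := by linarith
    rw [he, ← hS_def, hSS, ← ENNReal.ofReal_mul hSr.le, ← ENNReal.ofReal_mul (Real.rpow_nonneg hm2.le _)]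
    apply ENNReal.ofReal_le_ofReal
    have : (m/2) ^ (-α₁) * (Sr * ((m/2) ^ α₁ / α₁)) = Sr * (1/α₁) := by
      field_simp
      linear_combination hmul
    linarith [this]
  -- piece C
  have hC : ∫⁻ z in (ball (0 : EuclideanSpace ℝ (Fin ν)) R \ ball 0 (m/2)) \ ball x (m/2),
      ENNReal.ofReal (‖x - z‖ ^ (-α₁) * ‖z‖ ^ (-α₂)) ∂volume
      ≤ ENNReal.ofReal (Sr * (4 ^ α₁ * (Real.log (R/m) + Real.log 2))) := by
    have hb : ∀ z ∈ (ball (0 : EuclideanSpace ℝ (Fin ν)) R \ ball 0 (m/2)) \ ball x (m/2),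
        ENNReal.ofReal (‖x - z‖ ^ (-α₁) * ‖z‖ ^ (-α₂))
        ≤ ENNReal.ofReal (4 ^ α₁) * ENNReal.ofReal (‖z‖ ^ (-(ν:ℝ))) := by
      rintro z ⟨⟨hz1, hz2⟩, hz3⟩
      have hz2' : m/2 ≤ ‖z‖ := by
        simpa [mem_ball_zero_iff, not_lt] using hz2
      have hz0 : 0 < ‖z‖ := lt_of_lt_of_le hm2 hz2'
      have hz3' : m/2 ≤ ‖x - z‖ := by
        have : ¬ dist x z < m/2 := by
          rw [← mem_ball']; exact hz3
        rw [not_lt, dist_eq_norm] at this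
        exact this
      have hkey : ‖z‖/4 ≤ ‖x - z‖ := by
        rcases le_or_gt ‖z‖ (2*m) with h | h
        · linarith
        · have h5 : ‖z‖ - ‖x‖ ≤ ‖x - z‖ := by
            rw [norm_sub_rev]
            exact (norm_sub_norm_le z x)
          rw [← hm_def] at h5
          linarith
      have h1 : ‖x - z‖ ^ (-α₁) ≤ (‖z‖/4) ^ (-α₁) :=
        Real.rpow_le_rpow_of_nonpos (by positivity) hkey (neg_nonpos.2 hα₁.le)
      have h2 : (‖z‖/4) ^ (-α₁) = 4 ^ α₁ * ‖z‖ ^ (-α₁) := by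
        rw [Real.div_rpow (norm_nonneg z) (by norm_num : (0:ℝ) ≤ 4),
          Real.rpow_neg (by norm_num : (0:ℝ) ≤ 4), div_eq_mul_inv, inv_inv, mul_comm]
      calc ENNReal.ofReal (‖x - z‖ ^ (-α₁) * ‖z‖ ^ (-α₂))
          ≤ ENNReal.ofReal (4 ^ α₁ * ‖z‖ ^ (-α₁) * ‖z‖ ^ (-α₂)) := by
            apply ENNReal.ofReal_le_ofReal
            exact mul_le_mul_of_nonneg_right (h1.trans_eq h2)
              (Real.rpow_nonneg (norm_nonneg _) _)
        _ = ENNReal.ofReal (4 ^ α₁) * ENNReal.ofReal (‖z‖ ^ (-(ν:ℝ))) := by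
            rw [mul_assoc, ← Real.rpow_add hz0,
              (show -α₁ + -α₂ = -(ν:ℝ) by linarith),
              ENNReal.ofReal_mul h4.le]
    refine le_trans (setLIntegral_mono (by fun_prop) hb) ?_
    refine le_trans (lintegral_mono_set Set.diff_subset) ?_
    rw [lintegral_const_mul _ (by fun_prop),
      annulus_lintegral hν hm2 (by linarith : m/2 < R)]
    have hlog : Real.log (R/(m/2)) = Real.log (R/m) + Real.log 2 := by
      rw [(show R/(m/2) = (R/m)*2 by field_simp),
        Real.log_mul (by positivity) (by norm_num)]
    rw [hlog, ← hS_def, hSS, ← ENNReal.ofReal_mul hSr.le, ← ENNReal.ofReal_mul h4.le]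
    exact ENNReal.ofReal_le_ofReal (le_of_eq (by ring))
  calc _ ≤ ENNReal.ofReal (Sr * (1/α₂)) + (ENNReal.ofReal (Sr * (1/α₁))
        + ENNReal.ofReal (Sr * (4 ^ α₁ * (Real.log (R/m) + Real.log 2)))) :=
      add_le_add hA (add_le_add hB hC)
    _ ≤ ENNReal.ofReal (Sr * 4 ^ α₁ * Real.log (R/m)
        + (Sr * (1/α₂) + Sr * (1/α₁) + Sr * (4 ^ α₁ * Real.log 2))) := by
      rw [← ENNReal.ofReal_add (by positivity) (by positivity),
        ← ENNReal.ofReal_add (by positivity) (by positivity)]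
      exact ENNReal.ofReal_le_ofReal (le_of_eq (by ring))
end

section
/- With M as above and f(y) = min(1, |y|^{−1}) ∈ L²(ℝ), the function h(x) = ∫_ℝ M(x,y) f(y) dy satisfies h(x) = 0 for x < 0 while h(x) ≥ (3/4)∫_ℝ ψ(y) dy > 0 for all 0 < x < 1/3. Consequently h has a jump discontinuity at x = 0 and is not equal almost everywhere to any continuous function on ℝ. -/
open MeasureTheory
open scoped ENNReal

/-- The bump `ψ(x) = φ(2x) φ(2-2x)`. -/
noncomputable def paperPsi (φ : ℝ → ℝ) (x : ℝ) : ℝ := φ (2 * x) * φ (2 - 2 * x)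

/-- The kernel `M(x,y) = φ₁(x) φ₂(y) L(x,y)` with `φ₁(x) = φ(x+1)φ(2-x)`,
`φ₂(y) = φ(y-2)` and `L(x,y) = x⁻¹ ψ(y - x⁻¹)` for `x, y > 0`, `L = 0`
otherwise. -/
noncomputable def paperM (φ : ℝ → ℝ) (x y : ℝ) : ℝ :=
  (φ (x + 1) * φ (2 - x)) * φ (y - 2) *
    (if 0 < x ∧ 0 < y then x⁻¹ * paperPsi φ (y - x⁻¹) else 0)

section Aux

variable {φ : ℝ → ℝ} (hφ : ContDiff ℝ (⊤ : ℕ∞) φ)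
  (h0 : ∀ x : ℝ, x ≤ 0 → φ x = 0) (h1 : ∀ x : ℝ, 1 ≤ x → φ x = 1)
  (hmono : ∀ x ∈ Set.Ioo (0 : ℝ) 1, 0 < deriv φ x)

include hφ h0 h1 hmono in
lemma phi_mem : ∀ x : ℝ, φ x ∈ Set.Icc (0:ℝ) 1 := by
  have hsm : StrictMonoOn φ (Set.Icc (0:ℝ) 1) := by
    apply strictMonoOn_of_deriv_pos (convex_Icc 0 1) (hφ.continuous.continuousOn)
    intro x hx
    rw [interior_Icc] at hx
    exact hmono x hx
  intro x
  rcases le_or_gt x 0 with hx | hx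
  · simp [h0 x hx]
  rcases le_or_gt 1 x with hx1 | hx1
  · simp [h1 x hx1]
  constructor
  · have := hsm (Set.mem_Icc.2 ⟨le_refl 0, zero_le_one⟩)
      (Set.mem_Icc.2 ⟨hx.le, hx1.le⟩) hx
    rw [h0 0 le_rfl] at this; linarith
  · have := hsm (Set.mem_Icc.2 ⟨hx.le, hx1.le⟩)
      (Set.mem_Icc.2 ⟨zero_le_one, le_refl 1⟩) hx1
    rw [h1 1 le_rfl] at this; linarith

include hφ h0 h1 hmono in
lemma psi_nonneg : ∀ t : ℝ, 0 ≤ paperPsi φ t := fun t =>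
  mul_nonneg (phi_mem hφ h0 h1 hmono _).1 (phi_mem hφ h0 h1 hmono _).1

include h0 in
lemma psi_zero_of_not_mem : ∀ t : ℝ, t ∉ Set.Ioo (0:ℝ) 1 → paperPsi φ t = 0 := by
  intro t ht
  rw [Set.mem_Ioo, not_and_or, not_lt, not_lt] at ht
  rcases ht with ht | ht
  · have : φ (2 * t) = 0 := h0 _ (by linarith)
    simp [paperPsi, this]
  · have : φ (2 - 2 * t) = 0 := h0 _ (by linarith)
    simp [paperPsi, this]

include hφ in
lemma psi_cont : Continuous (paperPsi φ) := by
  have := hφ.continuous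
  exact (this.comp (continuous_const.mul continuous_id)).mul
    (this.comp (continuous_const.sub (continuous_const.mul continuous_id)))

include hφ h0 in
lemma psi_integrable : Integrable (paperPsi φ) := by
  apply (psi_cont hφ).integrable_of_hasCompactSupport
  apply HasCompactSupport.intro (isCompact_Icc (a := (0:ℝ)) (b := 1))
  intro x hx
  exact psi_zero_of_not_mem h0 x (fun h => hx ⟨h.1.le, h.2.le⟩)

include hφ h0 h1 hmono in
lemma psi_integral_pos : 0 < ∫ y : ℝ, paperPsi φ y := by
  rw [integral_pos_iff_support_of_nonneg (psi_nonneg hφ h0 h1 hmono)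
    (psi_integrable hφ h0)]
  have hopen : IsOpen {t : ℝ | 0 < paperPsi φ t} :=
    isOpen_lt continuous_const (psi_cont hφ)
  have hhalf : (1/2 : ℝ) ∈ {t : ℝ | 0 < paperPsi φ t} := by
    have heq : paperPsi φ (1/2) = 1 := by
      simp only [paperPsi]
      rw [show (2:ℝ) * (1/2) = 1 by norm_num]
      rw [show (2:ℝ) - 1 = 1 by norm_num, h1 1 le_rfl]
      norm_num
    show (0:ℝ) < paperPsi φ (1/2)
    rw [heq]; norm_num
  calc (0:ℝ≥0∞) < volume {t : ℝ | 0 < paperPsi φ t} :=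
        hopen.measure_pos volume ⟨_, hhalf⟩
    _ ≤ volume (Function.support (paperPsi φ)) :=
        measure_mono (fun t ht => ne_of_gt ht)

include hφ h0 h1 hmono in
lemma lower_bound {x : ℝ} (hx : x ∈ Set.Ioo (0:ℝ) (1/3)) :
    3 / 4 * (∫ y : ℝ, paperPsi φ y)
      ≤ ∫ y : ℝ, paperM φ x y * min 1 |y|⁻¹ := by
  obtain ⟨hx0, hx3⟩ := hx
  have hxi : (3:ℝ) < x⁻¹ := by
    rw [show (3:ℝ) = (1/3 : ℝ)⁻¹ by norm_num]
    exact inv_strictAnti₀ hx0 hx3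
  have hxi0 : (0:ℝ) < x⁻¹ := by linarith
  set F : ℝ → ℝ := fun t => x⁻¹ * paperPsi φ t * (t + x⁻¹)⁻¹ with hF
  -- pointwise identity
  have hpt : ∀ y : ℝ, paperM φ x y * min 1 |y|⁻¹ = F (y - x⁻¹) := by
    intro y
    by_cases hψ : paperPsi φ (y - x⁻¹) = 0
    · simp only [paperM, hF, hψ, mul_zero, zero_mul]
      split_ifs <;> simp
    · have ht : y - x⁻¹ ∈ Set.Ioo (0:ℝ) 1 := by
        by_contra h
        exact hψ (psi_zero_of_not_mem h0 _ h)
      have hy3 : (3:ℝ) < y := by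
        have := ht.1; linarith
      have hy0 : 0 < y := by linarith
      have e1 : φ (x + 1) = 1 := h1 _ (by linarith)
      have e2 : φ (2 - x) = 1 := h1 _ (by linarith)
      have e3 : φ (y - 2) = 1 := h1 _ (by linarith)
      have e4 : min 1 |y|⁻¹ = y⁻¹ := by
        rw [abs_of_pos hy0, min_eq_right]
        rw [inv_le_one_iff₀]; right; linarith
      have hcond : (0 < x ∧ 0 < y) := ⟨hx0, hy0⟩
      simp only [paperM, hF, e1, e2, e3, e4, if_pos hcond]
      rw [show y - x⁻¹ + x⁻¹ = y by ring]
      ring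
    -- end pointwise
  calc 3 / 4 * (∫ y : ℝ, paperPsi φ y)
      = ∫ t : ℝ, 3 / 4 * paperPsi φ t := (integral_const_mul _ _).symm
    _ ≤ ∫ t : ℝ, F t := by
        have hψint := psi_integrable hφ h0
        have hFmeas : AEStronglyMeasurable F volume := by
          apply Measurable.aestronglyMeasurable
          exact (measurable_const.mul (psi_cont hφ).measurable).mul
            ((measurable_id.add_const x⁻¹).inv)
        have hFint : Integrable F := by
          apply hψint.mono hFmeas
          filter_upwards with t
          by_cases hψ : paperPsi φ t = 0
          · simp [hF, hψ, Real.norm_eq_abs, abs_nonneg]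
          · have ht : t ∈ Set.Ioo (0:ℝ) 1 := by
              by_contra h; exact hψ (psi_zero_of_not_mem h0 _ h)
            have hu : (0:ℝ) < t + x⁻¹ := by have := ht.1; linarith
            have hle : x⁻¹ * (t + x⁻¹)⁻¹ ≤ 1 := by
              rw [← mul_inv]
              apply inv_le_one_of_one_le₀
              have : x * (t + x⁻¹) = x * t + 1 := by
                rw [mul_add, mul_inv_cancel₀ hx0.ne']
              rw [this]
              nlinarith [ht.1.le, hx0.le]
            have hψ0 : 0 ≤ paperPsi φ t := psi_nonneg hφ h0 h1 hmono t
            rw [Real.norm_eq_abs, Real.norm_eq_abs, hF]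
            rw [abs_of_nonneg (by positivity), abs_of_nonneg hψ0]
            calc x⁻¹ * paperPsi φ t * (t + x⁻¹)⁻¹
                = paperPsi φ t * (x⁻¹ * (t + x⁻¹)⁻¹) := by ring
              _ ≤ paperPsi φ t * 1 := by
                  exact mul_le_mul_of_nonneg_left hle hψ0
              _ = paperPsi φ t := mul_one _
        apply integral_mono (hψint.const_mul _) hFint
        intro t
        by_cases hψ : paperPsi φ t = 0
        · simp [hF, hψ]
        · have ht : t ∈ Set.Ioo (0:ℝ) 1 := by
            by_contra h; exact hψ (psi_zero_of_not_mem h0 _ h)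
          have hu : (0:ℝ) < t + x⁻¹ := by have := ht.1; linarith
          have hψ0 : 0 ≤ paperPsi φ t := psi_nonneg hφ h0 h1 hmono t
          have hkey : (3/4 : ℝ) ≤ x⁻¹ * (t + x⁻¹)⁻¹ := by
            rw [← mul_inv]
            have hxu : x * (t + x⁻¹) ≤ 4/3 := by
              have : x * (t + x⁻¹) = x * t + 1 := by
                rw [mul_add, mul_inv_cancel₀ hx0.ne']
              rw [this]
              nlinarith [ht.2.le, hx0.le]
            calc (3/4 : ℝ) = (4/3 : ℝ)⁻¹ := by norm_num
              _ ≤ (x * (t + x⁻¹))⁻¹ :=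
                  inv_anti₀ (by positivity) hxu
          calc 3 / 4 * paperPsi φ t
              ≤ (x⁻¹ * (t + x⁻¹)⁻¹) * paperPsi φ t :=
                mul_le_mul_of_nonneg_right hkey hψ0
            _ = F t := by rw [hF]; ring
    _ = ∫ y : ℝ, F (y - x⁻¹) := (integral_sub_right_eq_self F x⁻¹).symm
    _ = ∫ y : ℝ, paperM φ x y * min 1 |y|⁻¹ := by
        congr 1; ext y; rw [hpt y]

end Aux

/-- With `f(y) = min(1,|y|⁻¹) ∈ L²(ℝ)`, the function
`h(x) = ∫ M(x,y) f(y) dy` vanishes for `x < 0`, is bounded below by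
`(3/4) ∫ ψ > 0` on `(0, 1/3)`, and hence is not a.e. equal to any continuous
function: a smooth Carleman kernel can map an `L²` function to a discontinuous
one. -/
theorem paperM_maps_L2_to_discontinuous
    (φ : ℝ → ℝ) (hφ : ContDiff ℝ (⊤ : ℕ∞) φ)
    (h0 : ∀ x : ℝ, x ≤ 0 → φ x = 0) (h1 : ∀ x : ℝ, 1 ≤ x → φ x = 1)
    (hmono : ∀ x ∈ Set.Ioo (0 : ℝ) 1, 0 < deriv φ x) :
    (∀ x : ℝ, x < 0 → (∫ y : ℝ, paperM φ x y * min 1 |y|⁻¹) = 0)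
    ∧ (0 < ∫ y : ℝ, paperPsi φ y)
    ∧ (∀ x ∈ Set.Ioo (0 : ℝ) (1 / 3),
        3 / 4 * (∫ y : ℝ, paperPsi φ y)
          ≤ ∫ y : ℝ, paperM φ x y * min 1 |y|⁻¹)
    ∧ ∀ g : ℝ → ℝ, Continuous g →
        ¬ ((fun x : ℝ => ∫ y : ℝ, paperM φ x y * min 1 |y|⁻¹) =ᵐ[volume] g) := by
  have part1 : ∀ x : ℝ, x < 0 → (∫ y : ℝ, paperM φ x y * min 1 |y|⁻¹) = 0 := by
    intro x hx
    have : ∀ y : ℝ, paperM φ x y * min 1 |y|⁻¹ = 0 := by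
      intro y
      have : ¬ (0 < x ∧ 0 < y) := fun h => absurd h.1 (not_lt.2 hx.le)
      simp [paperM, this]
    simp only [this, integral_zero]
  have part2 : 0 < ∫ y : ℝ, paperPsi φ y := psi_integral_pos hφ h0 h1 hmono
  have part3 : ∀ x ∈ Set.Ioo (0 : ℝ) (1 / 3),
      3 / 4 * (∫ y : ℝ, paperPsi φ y)
        ≤ ∫ y : ℝ, paperM φ x y * min 1 |y|⁻¹ :=
    fun x hx => lower_bound hφ h0 h1 hmono hx
  refine ⟨part1, part2, part3, ?_⟩
  intro g hg hae
  set h : ℝ → ℝ := fun x : ℝ => ∫ y : ℝ, paperM φ x y * min 1 |y|⁻¹ with hh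
  set c : ℝ := 3 / 4 * (∫ y : ℝ, paperPsi φ y) with hc
  have hcpos : 0 < c := by positivity
  have hbad : volume {x : ℝ | ¬ h x = g x} = 0 := hae
  have key : ∀ s : Set ℝ, volume s ≠ 0 → ∃ x ∈ s, h x = g x := by
    intro s hs
    have h2 : volume (s \ {x : ℝ | ¬ h x = g x}) = volume s :=
      measure_diff_null hbad
    obtain ⟨x, hxs, hx2⟩ := nonempty_of_measure_ne_zero (h2 ▸ hs)
    exact ⟨x, hxs, not_not.mp hx2⟩
  -- left sequence
  have hleft : ∀ n : ℕ, ∃ x ∈ Set.Ioo (-(1/((n:ℝ)+1))) 0, h x = g x := by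
    intro n
    apply key
    rw [Real.volume_Ioo]
    simp only [ne_eq, ENNReal.ofReal_eq_zero, not_le]
    have : (0:ℝ) < 1/((n:ℝ)+1) := by positivity
    linarith
  choose xs hxs hxseq using hleft
  have hxlt : ∀ n : ℕ, xs n < 0 := fun n => (hxs n).2
  have hxgt : ∀ n : ℕ, -(1/((n:ℝ)+1)) < xs n := fun n => (hxs n).1
  have hxtend : Filter.Tendsto xs Filter.atTop (nhds 0) := by
    have hlo : Filter.Tendsto (fun n : ℕ => -(1/((n:ℝ)+1))) Filter.atTop (nhds 0) := by
      simpa using (tendsto_one_div_add_atTop_nhds_zero_nat : Filter.Tendsto (fun n : ℕ => 1/((n:ℝ)+1)) Filter.atTop (nhds 0)).neg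
    exact tendsto_of_tendsto_of_tendsto_of_le_of_le hlo tendsto_const_nhds
      (fun n => (hxgt n).le) (fun n => (hxlt n).le)
  have hg0 : g 0 = 0 := by
    have h01 : Filter.Tendsto (fun n => g (xs n)) Filter.atTop (nhds (g 0)) :=
      (hg.tendsto 0).comp hxtend
    have h02 : ∀ n : ℕ, g (xs n) = 0 := fun n => by
      rw [← hxseq n]; exact part1 _ (hxlt n)
    have : Filter.Tendsto (fun n => g (xs n)) Filter.atTop (nhds 0) := by
      simp only [h02]; exact tendsto_const_nhds
    exact tendsto_nhds_unique h01 this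
  -- right sequence
  have hright : ∀ n : ℕ, ∃ x ∈ Set.Ioo (0:ℝ) (min (1/3) (1/((n:ℝ)+1))), h x = g x := by
    intro n
    apply key
    rw [Real.volume_Ioo]
    simp only [ne_eq, ENNReal.ofReal_eq_zero, not_le]
    have h1' : (0:ℝ) < 1/3 := by norm_num
    have h2' : (0:ℝ) < 1/((n:ℝ)+1) := by positivity
    have := lt_min h1' h2'
    linarith
  choose ys hys hyseq using hright
  have hygt : ∀ n : ℕ, 0 < ys n := fun n => (hys n).1
  have hylt : ∀ n : ℕ, ys n < 1/((n:ℝ)+1) :=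
    fun n => lt_of_lt_of_le (hys n).2 (min_le_right _ _)
  have hymem : ∀ n : ℕ, ys n ∈ Set.Ioo (0:ℝ) (1/3) :=
    fun n => ⟨hygt n, lt_of_lt_of_le (hys n).2 (min_le_left _ _)⟩
  have hytend : Filter.Tendsto ys Filter.atTop (nhds 0) :=
    tendsto_of_tendsto_of_tendsto_of_le_of_le tendsto_const_nhds
      tendsto_one_div_add_atTop_nhds_zero_nat
      (fun n => (hygt n).le) (fun n => (hylt n).le)
  have hgy : Filter.Tendsto (fun n => g (ys n)) Filter.atTop (nhds (g 0)) :=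
    (hg.tendsto 0).comp hytend
  have hcl : c ≤ g 0 := by
    apply ge_of_tendsto' hgy
    intro n
    rw [← hyseq n]
    exact part3 _ (hymem n)
  rw [hg0] at hcl
  linarith
end

section
/- Let K : X × X → ℂ be a Carleman kernel of a bounded operator on L²(X) satisfying: (C1) for every f ∈ L²(X) the function x ↦ ∫_X K(x,y)f(y) dy is continuous on X, and (C2) the function x ↦ ∫_X |K(x,y)|² dy is continuous on X. Then the map F : X → L²(X), F(x) = K(x,·), is continuous from X to the (norm topology of the) Hilbert space L²(X). -/
/-!
In a Hilbert space `‖F x - F x₀‖² = ‖F x‖² - 2 Re ⟪F x₀, F x⟫ + ‖F x₀‖²`. For `F x = K(x,·)`,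
(C2) makes `‖F x‖²` continuous and (C1), applied to `f = conj K(x₀,·)`, makes `⟪F x₀, F x⟫`
continuous, so the right-hand side tends to `‖F x₀‖² - 2 ‖F x₀‖² + ‖F x₀‖² = 0` as `x → x₀`.
-/

open MeasureTheory Filter Topology

section InnerProductSpace

variable {𝕜 E X : Type*} [RCLike 𝕜] [NormedAddCommGroup E] [InnerProductSpace 𝕜 E]
  [TopologicalSpace X]

theorem continuousAt_of_continuousAt_inner_of_continuousAt_norm {F : X → E} {x₀ : X}
    (hinner : ContinuousAt (fun x => inner 𝕜 (F x₀) (F x)) x₀)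
    (hnorm : ContinuousAt (fun x => ‖F x‖) x₀) : ContinuousAt F x₀ := by
  have hsq : Tendsto (fun x => ‖F x - F x₀‖ ^ 2) (𝓝 x₀) (𝓝 0) := by
    have hlim : Tendsto
        (fun x => ‖F x‖ ^ 2 - 2 * RCLike.re (inner 𝕜 (F x₀) (F x)) + ‖F x₀‖ ^ 2) (𝓝 x₀)
        (𝓝 (‖F x₀‖ ^ 2 - 2 * RCLike.re (inner 𝕜 (F x₀) (F x₀)) + ‖F x₀‖ ^ 2)) :=
      ((hnorm.pow 2).sub ((RCLike.continuous_re.continuousAt.comp hinner).const_mul 2)).add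
        continuousAt_const
    rw [← @norm_sq_eq_re_inner 𝕜, show ‖F x₀‖ ^ 2 - 2 * ‖F x₀‖ ^ 2 + ‖F x₀‖ ^ 2 = 0 by ring]
      at hlim
    refine hlim.congr fun x => ?_
    rw [@norm_sub_sq 𝕜, inner_re_symm]
  have hnorm_sub := (Real.continuous_sqrt.tendsto 0).comp hsq
  simp only [Function.comp_def, Real.sqrt_sq (norm_nonneg _), Real.sqrt_zero] at hnorm_sub
  exact tendsto_iff_norm_sub_tendsto_zero.2 hnorm_sub

end InnerProductSpace

namespace MeasureTheory.MemLp

variable {α : Type*} [MeasurableSpace α] {μ : Measure α}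

theorem inner_toLp_toLp {𝕜 E : Type*} [RCLike 𝕜] [NormedAddCommGroup E] [InnerProductSpace 𝕜 E]
    {f g : α → E} (hf : MemLp f 2 μ) (hg : MemLp g 2 μ) :
    inner 𝕜 (hf.toLp f) (hg.toLp g) = ∫ a, inner 𝕜 (f a) (g a) ∂μ := by
  rw [L2.inner_def]
  refine integral_congr_ae ?_
  filter_upwards [hf.coeFn_toLp, hg.coeFn_toLp] with a hfa hga
  rw [hfa, hga]

theorem norm_toLp_eq_sqrt_integral {E : Type*} [NormedAddCommGroup E] {f : α → E}
    (hf : MemLp f 2 μ) : ‖hf.toLp f‖ = √(∫ a, ‖f a‖ ^ 2 ∂μ) := by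
  rw [Lp.norm_toLp, hf.eLpNorm_eq_integral_rpow_norm two_ne_zero ENNReal.ofNat_ne_top,
    ENNReal.toReal_ofReal (by positivity), Real.sqrt_eq_rpow]
  simp

end MeasureTheory.MemLp

/-- If a Carleman kernel `K` has the properties (C1): `x ↦ ∫ K(x,y) f(y) dy`
is continuous for every `f ∈ L²`, and (C2): `x ↦ ∫ |K(x,y)|² dy` is
continuous, then the map `x ↦ K(x,·)` is continuous from `X` into the Hilbert
space `L²(X)`. -/
theorem carleman_kernel_continuous_into_L2
    {X : Type*} [TopologicalSpace X] [MeasurableSpace X]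
    (μ : Measure X) (K : X → X → ℂ)
    (hK : ∀ x : X, MemLp (K x) 2 μ)
    (hC1 : ∀ f : X → ℂ, MemLp f 2 μ →
      Continuous (fun x : X => ∫ y, K x y * f y ∂μ))
    (hC2 : Continuous (fun x : X => ∫ y, ‖K x y‖ ^ 2 ∂μ)) :
    Continuous (fun x : X => (hK x).toLp (K x)) := by
  refine continuous_iff_continuousAt.2 fun x₀ =>
    continuousAt_of_continuousAt_inner_of_continuousAt_norm (𝕜 := ℂ) ?_ ?_
  · simp_rw [MemLp.inner_toLp_toLp, RCLike.inner_apply', mul_comm (starRingEnd ℂ _)]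
    exact (hC1 _ (hK x₀).star).continuousAt
  · simp_rw [MemLp.norm_toLp_eq_sqrt_integral]
    exact (Real.continuous_sqrt.comp hC2).continuousAt
end
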